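/- arXiv:2112.15081 — 5 statements merged into one kernel-verified Lean document; each statement's English description precedes it below -/
import Mathlib

section
/- Let n ≥ 1 and let π = π_1⋯π_k be a pattern (a finite sequence of nonnegative integers) with π_1 = 0 and π_i > 0 for all i > 1. Then the number of inversion sequences of length n avoiding π equals the sum over all subsets S ⊆ [n−1] of the number of S-inversion sequences avoiding the pattern π_2⋯π_k; i.e. |I_n(π)| = Σ_{S ⊆ [n−1]} |I_S(π_2⋯π_k)|. -/
/-- Two integer sequences of the same length are order isomorphic:
entries compare in the same way at every pair of positions. -/
def OrderIsoSeq (a b : List ℕ) : Prop :=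
  a.length = b.length ∧
  ∀ i j : ℕ, i < a.length → j < a.length →
    ((a[i]! < a[j]!) ↔ (b[i]! < b[j]!)) ∧ ((a[i]! = a[j]!) ↔ (b[i]! = b[j]!))

/-- A sequence `e` contains the pattern `p` if some (not necessarily consecutive)
subsequence of `e` is order isomorphic to `p`. -/
def ContainsPat (e p : List ℕ) : Prop :=
  ∃ s : List ℕ, s.Sublist e ∧ OrderIsoSeq s p

/-- A sequence `e` avoids the pattern `p` if it does not contain it. -/
def AvoidsPat (e p : List ℕ) : Prop := ¬ ContainsPat e p

/-- Inversion sequences of length `n`: `e = e_1 ⋯ e_n` with `0 ≤ e_i < i`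
(position `i` is stored at index `i - 1`). -/
def InvSeq (n : ℕ) : Set (List ℕ) :=
  {e | e.length = n ∧ ∀ i : ℕ, i < n → e[i]! < i + 1}

/-- `S`-inversion sequences for a finite set `S = {s_1 < ⋯ < s_n}` of positive
integers: sequences `e = e_1 ⋯ e_n` with `0 ≤ e_i < s_i`. -/
def SInvSeq (S : Finset ℕ) : Set (List ℕ) :=
  {e | e.length = S.card ∧ ∀ i : ℕ, i < S.card → e[i]! < (S.sort (· ≤ ·))[i]!}

/-- `I_n(p)`: inversion sequences of length `n` avoiding the pattern `p`. -/
def InvAvoid (n : ℕ) (p : List ℕ) : Set (List ℕ) :=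
  {e ∈ InvSeq n | AvoidsPat e p}

/-- `I_S(p)`: `S`-inversion sequences avoiding the pattern `p`. -/
def SInvAvoid (S : Finset ℕ) (p : List ℕ) : Set (List ℕ) :=
  {e ∈ SInvSeq S | AvoidsPat e p}

/-!
An inversion sequence `e` of length `n ≥ 1` has `e₁ = 0`, so it is determined by the set
`S ⊆ [n-1]` of (0-based) positions of its positive entries together with the list of those
entries decreased by one; the bound `e_j < j + 1` at a position `j ∈ S` is exactly the
`S`-inversion bound for the shifted entry. Since `π₁ = 0` and the other letters of `π` are
positive, an occurrence of `π` in `e` may use `e₁` for its first letter and must use positive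
entries for the others, so `e` avoids `π` iff its shifted positive entries avoid `π₂ ⋯ π_k`.
-/

theorem OrderIsoSeq.map_iff {g : ℕ → ℕ} {s q : List ℕ} (hg : StrictMonoOn g {x | x ∈ s}) :
    OrderIsoSeq (s.map g) q ↔ OrderIsoSeq s q := by
  have hmem : ∀ i < s.length, s[i]! ∈ {x | x ∈ s} := fun i hi => by
    simp [getElem!_pos s i hi]
  have hget : ∀ i < s.length, (s.map g)[i]! = g s[i]! := fun i hi => by
    simp [getElem!_pos, hi]
  unfold OrderIsoSeq
  rw [List.length_map]
  refine and_congr_right fun _ => forall₄_congr fun i j hi hj => ?_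
  rw [hget i hi, hget j hj, hg.lt_iff_lt (hmem i hi) (hmem j hj),
    hg.injOn.eq_iff (hmem i hi) (hmem j hj)]

theorem containsPat_map_iff {g : ℕ → ℕ} {l q : List ℕ} (hg : StrictMonoOn g {x | x ∈ l}) :
    ContainsPat (l.map g) q ↔ ContainsPat l q := by
  simp only [ContainsPat, List.sublist_map_iff]
  constructor
  · rintro ⟨_, ⟨s, hs, rfl⟩, hiso⟩
    exact ⟨s, hs, (OrderIsoSeq.map_iff (hg.mono fun _ hx => hs.subset hx)).1 hiso⟩
  · rintro ⟨s, hs, hiso⟩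
    exact ⟨_, ⟨s, hs, rfl⟩, (OrderIsoSeq.map_iff (hg.mono fun _ hx => hs.subset hx)).2 hiso⟩

theorem orderIsoSeq_cons_zero_cons_iff {a : ℕ} {t q : List ℕ} (hq : ∀ x ∈ q, 0 < x) :
    OrderIsoSeq (a :: t) (0 :: q) ↔ (∀ x ∈ t, a < x) ∧ OrderIsoSeq t q := by
  have hq' : ∀ i < q.length, 0 < q[i]! := fun i hi => by
    rw [getElem!_pos q i hi]
    exact hq _ (List.getElem_mem hi)
  simp only [OrderIsoSeq, List.length_cons, Nat.add_right_cancel_iff]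
  constructor
  · rintro ⟨hlen, hcmp⟩
    refine ⟨fun x hx => ?_, hlen, fun i j hi hj => by
      simpa using hcmp (i + 1) (j + 1) (by omega) (by omega)⟩
    obtain ⟨i, hi, rfl⟩ := List.getElem_of_mem hx
    have hlt := (hcmp 0 (i + 1) (by omega) (by omega)).1
    simp only [List.getElem!_cons_zero, List.getElem!_cons_succ, getElem!_pos t i hi] at hlt
    exact hlt.2 (hq' i (by omega))
  · rintro ⟨ht, hlen, hcmp⟩
    have ht' : ∀ i < t.length, a < t[i]! := fun i hi => by
      rw [getElem!_pos t i hi]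
      exact ht _ (List.getElem_mem hi)
    refine ⟨hlen, fun i j hi hj => ?_⟩
    rcases i with _ | i <;> rcases j with _ | j
    · simp
    · simp only [List.getElem!_cons_zero, List.getElem!_cons_succ]
      have := ht' j (by omega)
      have := hq' j (by omega)
      omega
    · simp only [List.getElem!_cons_zero, List.getElem!_cons_succ]
      have := ht' i (by omega)
      have := hq' i (by omega)
      omega
    · simpa using hcmp i j (by omega) (by omega)

theorem containsPat_zero_cons_iff {r q : List ℕ} (hq : ∀ x ∈ q, 0 < x) :
    ContainsPat (0 :: r) (0 :: q) ↔ ContainsPat (r.filter (0 < ·)) q := by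
  constructor
  · rintro ⟨_ | ⟨a, t⟩, hsub, hiso⟩
    · exact absurd hiso.1 (by simp)
    obtain ⟨hpos, hiso⟩ := (orderIsoSeq_cons_zero_cons_iff hq).1 hiso
    have ht : t.filter (0 < ·) = t :=
      List.filter_eq_self.2 fun x hx => by simpa using Nat.zero_lt_of_lt (hpos x hx)
    refine ⟨t, ?_, hiso⟩
    simpa [ht] using ((List.sublist_cons_self a t).trans hsub).filter (fun x => decide (0 < x))
  · rintro ⟨t, hsub, hiso⟩
    have hpos : ∀ x ∈ t, 0 < x := fun x hx => by
      simpa using (List.mem_filter.1 (hsub.subset hx)).2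
    exact ⟨0 :: t, (hsub.trans List.filter_sublist).cons_cons 0,
      (orderIsoSeq_cons_zero_cons_iff hq).2 ⟨hpos, hiso⟩⟩

def posValues (e : List ℕ) : List ℕ := (e.filter (0 < ·)).map (· - 1)

theorem avoidsPat_zero_cons_iff {r q : List ℕ} (hq : ∀ x ∈ q, 0 < x) :
    AvoidsPat (0 :: r) (0 :: q) ↔ AvoidsPat (posValues (0 :: r)) q := by
  refine not_congr ((containsPat_zero_cons_iff hq).trans ?_)
  rw [posValues, List.filter_cons_of_neg (by simp), containsPat_map_iff]
  intro x hx y hy hxy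
  have hx0 : 0 < x := by simpa using (List.mem_filter.1 hx).2
  show x - 1 < y - 1
  omega

theorem filter_pos_eq_map_sort {e : List ℕ} {S : Finset ℕ}
    (hS : ∀ j, j ∈ S ↔ j < e.length ∧ 0 < e[j]!) :
    e.filter (0 < ·) = (S.sort (· ≤ ·)).map (e[·]!) := by
  have hsort : S.sort (· ≤ ·) = (List.range e.length).filter (0 < e[·]!) := by
    have hnd := (List.nodup_range (n := e.length)).filter fun j => decide (0 < e[j]!)
    rw [← (List.toFinset_sort (· ≤ ·) hnd).2 ((List.pairwise_lt_range.filter _).imp le_of_lt)]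
    congr 1
    ext j
    simp [hS]
  have he : e = (List.range e.length).map (e[·]!) :=
    List.ext_getElem (by simp) fun i h _ => by
      rw [List.getElem_map, List.getElem_range, getElem!_pos e i h]
  conv_lhs => rw [he]
  rw [hsort, List.filter_map]
  rfl

def posSupport (n : ℕ) (e : List ℕ) : Finset ℕ := (Finset.Icc 1 (n - 1)).filter (0 < e[·]!)

def spread (n : ℕ) (S : Finset ℕ) (f : List ℕ) : List ℕ :=
  (List.range n).map fun j => if j ∈ S then f[(S.sort (· ≤ ·)).idxOf j]! + 1 else 0

section Spread

variable {n : ℕ} {S : Finset ℕ} {f : List ℕ}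

@[simp]
theorem length_spread : (spread n S f).length = n := by
  simp [spread]

theorem getElem!_spread {j : ℕ} (hj : j < n) :
    (spread n S f)[j]! = if j ∈ S then f[(S.sort (· ≤ ·)).idxOf j]! + 1 else 0 := by
  rw [getElem!_pos (spread n S f) j (by simpa using hj)]
  simp [spread]

theorem lt_of_mem_of_subset_Icc (hS : S ⊆ Finset.Icc 1 (n - 1)) {j : ℕ} (hj : j ∈ S) :
    j < n := by
  have := Finset.mem_Icc.1 (hS hj)
  omega

theorem mem_iff_pos_spread (hS : S ⊆ Finset.Icc 1 (n - 1)) (j : ℕ) :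
    j ∈ S ↔ j < n ∧ 0 < (spread n S f)[j]! := by
  refine ⟨fun hj => ?_, fun ⟨hjn, hpos⟩ => ?_⟩
  · have hjn := lt_of_mem_of_subset_Icc hS hj
    rw [getElem!_spread hjn, if_pos hj]
    exact ⟨hjn, Nat.succ_pos _⟩
  · by_contra hj
    rw [getElem!_spread hjn, if_neg hj] at hpos
    exact hpos.false

theorem posSupport_spread (hS : S ⊆ Finset.Icc 1 (n - 1)) : posSupport n (spread n S f) = S := by
  ext j
  rw [posSupport, Finset.mem_filter]
  refine ⟨fun ⟨hj, hpos⟩ => (mem_iff_pos_spread hS j).2 ⟨?_, hpos⟩,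
    fun hj => ⟨hS hj, ((mem_iff_pos_spread hS j).1 hj).2⟩⟩
  have := Finset.mem_Icc.1 hj
  omega

theorem posValues_spread (hS : S ⊆ Finset.Icc 1 (n - 1)) (hf : f.length = S.card) :
    posValues (spread n S f) = f := by
  rw [posValues, filter_pos_eq_map_sort (by simpa using mem_iff_pos_spread hS), List.map_map]
  refine List.ext_getElem (by simp [hf]) fun k hk _ => ?_
  have hk' : k < (S.sort (· ≤ ·)).length := by simpa using hk
  have hmem : (S.sort (· ≤ ·))[k] ∈ S := (Finset.mem_sort _).1 (List.getElem_mem hk')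
  rw [List.getElem_map, Function.comp_apply, getElem!_spread (lt_of_mem_of_subset_Icc hS hmem),
    if_pos hmem, List.Nodup.idxOf_getElem (Finset.sort_nodup _ _) k hk',
    getElem!_pos f k (by omega), Nat.add_sub_cancel]

theorem spread_mem_invSeq (hf : f ∈ SInvSeq S) : spread n S f ∈ InvSeq n := by
  refine ⟨length_spread, fun j hj => ?_⟩
  rw [getElem!_spread hj]
  split_ifs with hjS
  · have hidx : (S.sort (· ≤ ·)).idxOf j < (S.sort (· ≤ ·)).length :=
      List.idxOf_lt_length_iff.2 ((Finset.mem_sort _).2 hjS)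
    have hbound := hf.2 _ (by rwa [Finset.length_sort] at hidx)
    rw [getElem!_pos (S.sort (· ≤ ·)) _ hidx, List.getElem_idxOf hidx] at hbound
    omega
  · omega

end Spread

namespace InvSeq

variable {n : ℕ} {e : List ℕ}

theorem eq_zero_cons (hn : 1 ≤ n) (he : e ∈ InvSeq n) : ∃ r, e = 0 :: r := by
  obtain ⟨hlen, hlt⟩ := he
  rcases e with _ | ⟨a, r⟩
  · simp at hlen
    omega
  · have := hlt 0 hn
    simp only [List.getElem!_cons_zero] at this
    exact ⟨r, by rw [Nat.lt_one_iff.1 this]⟩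

theorem mem_posSupport_iff (hn : 1 ≤ n) (he : e ∈ InvSeq n) (j : ℕ) :
    j ∈ posSupport n e ↔ j < e.length ∧ 0 < e[j]! := by
  obtain ⟨r, rfl⟩ := eq_zero_cons hn he
  rw [posSupport, Finset.mem_filter, Finset.mem_Icc, he.1]
  rcases j with _ | j
  · simp
  · omega

theorem posValues_eq (hn : 1 ≤ n) (he : e ∈ InvSeq n) :
    posValues e = ((posSupport n e).sort (· ≤ ·)).map (e[·]! - 1) := by
  rw [posValues, filter_pos_eq_map_sort (mem_posSupport_iff hn he), List.map_map]
  rfl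

theorem posValues_mem_sInvSeq (hn : 1 ≤ n) (he : e ∈ InvSeq n) :
    posValues e ∈ SInvSeq (posSupport n e) := by
  rw [posValues_eq hn he]
  refine ⟨by simp, fun i hi => ?_⟩
  have hi' : i < ((posSupport n e).sort (· ≤ ·)).length := by simpa using hi
  have hj := (mem_posSupport_iff hn he _).1 ((Finset.mem_sort _).1 (List.getElem_mem hi'))
  rw [getElem!_pos _ i (by simpa using hi'), List.getElem_map, getElem!_pos _ i hi']
  have := he.2 _ (he.1 ▸ hj.1)
  omega

theorem spread_posSupport_posValues (hn : 1 ≤ n) (he : e ∈ InvSeq n) :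
    spread n (posSupport n e) (posValues e) = e := by
  refine List.ext_getElem (by rw [length_spread, he.1]) fun j hj hje => ?_
  have hjn : j < n := by simpa using hj
  rw [← getElem!_pos _ j hj, ← getElem!_pos e j hje, getElem!_spread hjn]
  split_ifs with hjS
  · have hidx : ((posSupport n e).sort (· ≤ ·)).idxOf j <
        ((posSupport n e).sort (· ≤ ·)).length :=
      List.idxOf_lt_length_iff.2 ((Finset.mem_sort _).2 hjS)
    rw [posValues_eq hn he, getElem!_pos _ _ (by simpa using hidx), List.getElem_map,
      List.getElem_idxOf hidx]
    have := ((mem_posSupport_iff hn he j).1 hjS).2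
    omega
  · have := mt (mem_posSupport_iff hn he j).2 hjS
    omega

theorem avoidsPat_iff {p : List ℕ} (hn : 1 ≤ n) (hp : ∀ x ∈ p, 0 < x)
    (he : e ∈ InvSeq n) : AvoidsPat e (0 :: p) ↔ AvoidsPat (posValues e) p := by
  obtain ⟨r, rfl⟩ := eq_zero_cons hn he
  exact _root_.avoidsPat_zero_cons_iff hp

theorem finite (n : ℕ) : (InvSeq n).Finite := by
  refine ((List.finite_length_eq (Fin n) n).image (List.map Fin.val)).subset ?_
  rintro e ⟨hlen, hlt⟩
  have hbound : ∀ x ∈ e, x < n := fun x hx => by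
    obtain ⟨i, hi, rfl⟩ := List.getElem_of_mem hx
    have := hlt i (hlen ▸ hi)
    rw [getElem!_pos e i hi] at this
    omega
  exact ⟨e.pmap Fin.mk hbound, by simp [hlen], by simp [List.map_pmap]⟩

end InvSeq

theorem pairwiseDisjoint_image_spread {n : ℕ} {T : Set (Finset ℕ)}
    {A : Finset ℕ → Set (List ℕ)} (hT : ∀ S ∈ T, S ⊆ Finset.Icc 1 (n - 1)) :
    T.PairwiseDisjoint fun S => spread n S '' A S := by
  intro S hS S' hS' hne
  refine Set.disjoint_left.2 ?_
  rintro _ ⟨f, -, rfl⟩ ⟨f', -, hf'⟩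
  refine hne ?_
  rw [← posSupport_spread (f := f) (hT S hS), ← hf', posSupport_spread (hT S' hS')]

theorem invAvoid_eq_biUnion {n : ℕ} {p : List ℕ} (hn : 1 ≤ n) (hp : ∀ x ∈ p, 0 < x) :
    InvAvoid n (0 :: p) =
      ⋃ S ∈ (Finset.Icc 1 (n - 1)).powerset, spread n S '' SInvAvoid S p := by
  ext e
  simp only [Set.mem_iUnion, Set.mem_image, Finset.mem_powerset, exists_prop]
  constructor
  · rintro ⟨he, hav⟩
    exact ⟨posSupport n e, Finset.filter_subset _ _, posValues e,
      ⟨InvSeq.posValues_mem_sInvSeq hn he, (InvSeq.avoidsPat_iff hn hp he).1 hav⟩,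
      InvSeq.spread_posSupport_posValues hn he⟩
  · rintro ⟨S, hS, f, ⟨hf, hav⟩, rfl⟩
    have he := spread_mem_invSeq (n := n) hf
    exact ⟨he, (InvSeq.avoidsPat_iff hn hp he).2 (by rwa [posValues_spread hS hf.1])⟩

/-- Theorem: for `n ≥ 1` and a pattern `π = 0 :: p` whose first entry is `0` and whose
remaining entries are all positive, `|I_n(π)| = Σ_{S ⊆ [n-1]} |I_S(p)|`. -/
theorem stmt_0 (n : ℕ) (hn : 1 ≤ n) (p : List ℕ) (hp : ∀ x ∈ p, 0 < x) :
    (InvAvoid n (0 :: p)).ncard =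
      ∑ S ∈ (Finset.Icc 1 (n - 1)).powerset, (SInvAvoid S p).ncard := by
  rw [invAvoid_eq_biUnion hn hp, ← Finset.set_biUnion_coe,
    Set.Finite.ncard_biUnion (Finset.finite_toSet _) (fun S _ => (InvSeq.finite n).subset ?_)
      (pairwiseDisjoint_image_spread fun _ hS => Finset.mem_powerset.1 hS), finsum_mem_coe_finset]
  · refine Finset.sum_congr rfl fun S hS => Set.InjOn.ncard_image fun f hf g hg hfg => ?_
    rw [← posValues_spread (Finset.mem_powerset.1 hS) hf.1.1,
      ← posValues_spread (Finset.mem_powerset.1 hS) hg.1.1, hfg]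
  · rintro _ ⟨f, hf, rfl⟩
    exact spread_mem_invSeq hf.1
end

section
/- For any finite set S of positive integers, the number of S-inversion sequences avoiding the pattern 210 equals the number of S-inversion sequences avoiding the pattern 201; i.e. |I_S(210)| = |I_S(201)|. -/
/-!
Call an entry a record if it is at least every entry before it. Read a sequence from left to
right, with running maximum `M`. A non-record `v` completes a `201` iff `b < v < a` for earlier
entries `a` before `b`, i.e. iff `v` lies outside the set `A` of values below `M` not yet covered
by such a pair; it completes a `210` iff it is smaller than the previous non-record `L`. So a
`201`-avoider may give a non-record any value `v ∈ A`, after which `A` shrinks to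
`{x ∈ A | x ≤ v}`, and a `210`-avoider any value of `[L, M)`, which then shrinks to `[v, M)`.
Since `|A| = M - L` throughout, sending the `r`-th smallest element of `A` to the `r`-th largest
element `M - 1 - r` of `[L, M)`, and keeping records, is a bijection between the two classes.
Non-records lie below an earlier record, so the bounds `e_i < s_i` only concern records, which
the bijection does not move.
-/

namespace InversionSeq

open scoped List

section Sublist

variable {α : Type*}

lemma pair_sublist_append_singleton {a b v : α} {h : List α} :
    [a, b] <+ h ++ [v] ↔ [a, b] <+ h ∨ a ∈ h ∧ b = v := by
  rw [List.sublist_append_iff]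
  constructor
  · rintro ⟨l₁, l₂, hl, h₁, h₂⟩
    rcases List.sublist_singleton.1 h₂ with rfl | rfl
    · simp_all
    · obtain ⟨rfl, hbv⟩ := List.append_inj' (s₁ := [a]) (t₁ := [b]) hl rfl
      exact Or.inr ⟨List.singleton_sublist.1 h₁, List.singleton_inj.1 hbv⟩
  · rintro (hab | ⟨ha, rfl⟩)
    · exact ⟨[a, b], [], by simp, hab, List.nil_sublist _⟩
    · exact ⟨[a], [b], rfl, List.singleton_sublist.2 ha, List.Sublist.refl _⟩

lemma triple_sublist_iff {a b c : α} {e : List α} :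
    [a, b, c] <+ e ↔ ∃ e₁ e₂, e = e₁ ++ c :: e₂ ∧ [a, b] <+ e₁ := by
  rw [show [a, b, c] = [a, b] ++ [c] from rfl, List.append_sublist_iff]
  constructor
  · rintro ⟨r₁, r₂, rfl, hab, hc⟩
    obtain ⟨s, t, rfl⟩ := List.append_of_mem (List.singleton_sublist.1 hc)
    exact ⟨r₁ ++ s, t, by simp, hab.trans (List.sublist_append_left _ _)⟩
  · rintro ⟨e₁, e₂, rfl, hab⟩
    exact ⟨e₁, c :: e₂, rfl, hab, by simp⟩

def AvoidsAfter (C : List α → α → Prop) (h e : List α) : Prop :=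
  ∀ e₁ v e₂, e = e₁ ++ v :: e₂ → ¬ C (h ++ e₁) v

lemma avoidsAfter_nil (C : List α → α → Prop) (h : List α) : AvoidsAfter C h [] := by
  intro e₁ v e₂ he
  simp at he

lemma avoidsAfter_cons {C : List α → α → Prop} {h e : List α} {v : α} :
    AvoidsAfter C h (v :: e) ↔ ¬ C h v ∧ AvoidsAfter C (h ++ [v]) e := by
  constructor
  · intro hav
    refine ⟨by simpa using hav [] v e rfl, fun e₁ w e₂ he => ?_⟩
    simpa using hav (v :: e₁) w e₂ (by simp [he])
  · rintro ⟨hv, hav⟩ e₁ w e₂ he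
    rcases e₁ with _ | ⟨u, e₁⟩
    · obtain ⟨rfl, rfl⟩ := List.cons.inj he
      simpa using hv
    · obtain ⟨rfl, rfl⟩ := List.cons.inj he
      simpa using hav e₁ w e₂ rfl

end Sublist

lemma orderIsoSeq_201_iff {a b c : ℕ} : OrderIsoSeq [a, b, c] [2, 0, 1] ↔ b < c ∧ c < a := by
  constructor
  · rintro ⟨-, hiso⟩
    have h₁ := (hiso 1 2 (by simp) (by simp)).1
    have h₂ := (hiso 2 0 (by simp) (by simp)).1
    simp_all
  · rintro ⟨hbc, hca⟩
    refine ⟨rfl, fun i j hi hj => ?_⟩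
    simp only [List.length_cons, List.length_nil] at hi hj
    interval_cases i <;> interval_cases j <;> simp <;> omega

lemma orderIsoSeq_210_iff {a b c : ℕ} : OrderIsoSeq [a, b, c] [2, 1, 0] ↔ c < b ∧ b < a := by
  constructor
  · rintro ⟨-, hiso⟩
    have h₁ := (hiso 2 1 (by simp) (by simp)).1
    have h₂ := (hiso 1 0 (by simp) (by simp)).1
    simp_all
  · rintro ⟨hcb, hba⟩
    refine ⟨rfl, fun i j hi hj => ?_⟩
    simp only [List.length_cons, List.length_nil] at hi hj
    interval_cases i <;> interval_cases j <;> simp <;> omega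

lemma avoidsPat_iff_avoidsAfter {e p : List ℕ} (hp : p.length = 3) :
    AvoidsPat e p ↔
      AvoidsAfter (fun h v => ∃ a b, [a, b] <+ h ∧ OrderIsoSeq [a, b, v] p) [] e := by
  simp only [AvoidsPat, ContainsPat, AvoidsAfter, List.nil_append]
  constructor
  · rintro hav e₁ c e₂ rfl ⟨a, b, hab, hiso⟩
    exact hav ⟨[a, b, c], triple_sublist_iff.2 ⟨e₁, e₂, rfl, hab⟩, hiso⟩
  · rintro hav ⟨s, hs, hiso⟩
    obtain ⟨a, b, c, rfl⟩ := List.length_eq_three.1 (hiso.1.trans hp)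
    obtain ⟨e₁, e₂, rfl, hab⟩ := triple_sublist_iff.1 hs
    exact hav e₁ c e₂ rfl ⟨a, b, hab, hiso⟩

def Completes201 (h : List ℕ) (v : ℕ) : Prop := ∃ a b, [a, b] <+ h ∧ b < v ∧ v < a

def Completes210 (h : List ℕ) (v : ℕ) : Prop := ∃ a b, [a, b] <+ h ∧ v < b ∧ b < a

lemma avoidsPat_201_iff {e : List ℕ} :
    AvoidsPat e [2, 0, 1] ↔ AvoidsAfter Completes201 [] e := by
  simp only [avoidsPat_iff_avoidsAfter (p := [2, 0, 1]) rfl, orderIsoSeq_201_iff]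
  rfl

lemma avoidsPat_210_iff {e : List ℕ} :
    AvoidsPat e [2, 1, 0] ↔ AvoidsAfter Completes210 [] e := by
  simp only [avoidsPat_iff_avoidsAfter (p := [2, 1, 0]) rfl, orderIsoSeq_210_iff]
  rfl

def runMax (h : List ℕ) : ℕ := h.foldr max 0

open scoped Classical in
noncomputable def available201 (h : List ℕ) : Finset ℕ :=
  (Finset.range (runMax h)).filter fun x => ¬ Completes201 h x

section Scan

variable {h e : List ℕ} {v x : ℕ}

lemma le_runMax (hx : x ∈ h) : x ≤ runMax h :=
  List.le_max_of_le hx le_rfl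

lemma exists_lt_of_lt_runMax (hx : x < runMax h) : ∃ a ∈ h, x < a := by
  by_contra! hle
  exact hx.not_ge (List.max_le_of_forall_le h x hle)

lemma runMax_append_singleton : runMax (h ++ [v]) = max (runMax h) v := by
  induction h with
  | nil => simp [runMax]
  | cons a h ih => simp only [runMax, List.cons_append, List.foldr_cons] at ih ⊢; omega

lemma Completes201.lt_runMax (hx : Completes201 h x) : x < runMax h := by
  obtain ⟨a, b, hab, -, hxa⟩ := hx
  exact hxa.trans_le (le_runMax (hab.subset (by simp)))

lemma Completes210.lt_runMax (hx : Completes210 h x) : x < runMax h := by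
  obtain ⟨a, b, hab, hxb, hba⟩ := hx
  exact (hxb.trans hba).trans_le (le_runMax (hab.subset (by simp)))

lemma completes201_append_singleton :
    Completes201 (h ++ [v]) x ↔ Completes201 h x ∨ v < x ∧ x < runMax h := by
  simp only [Completes201, pair_sublist_append_singleton]
  constructor
  · rintro ⟨a, b, hab | ⟨ha, rfl⟩, hbx, hxa⟩
    · exact Or.inl ⟨a, b, hab, hbx, hxa⟩
    · exact Or.inr ⟨hbx, hxa.trans_le (le_runMax ha)⟩
  · rintro (⟨a, b, hab, hbx, hxa⟩ | ⟨hvx, hxM⟩)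
    · exact ⟨a, b, Or.inl hab, hbx, hxa⟩
    · obtain ⟨a, ha, hxa⟩ := exists_lt_of_lt_runMax hxM
      exact ⟨a, v, Or.inr ⟨ha, rfl⟩, hvx, hxa⟩

lemma completes210_append_singleton :
    Completes210 (h ++ [v]) x ↔ Completes210 h x ∨ x < v ∧ v < runMax h := by
  simp only [Completes210, pair_sublist_append_singleton]
  constructor
  · rintro ⟨a, b, hab | ⟨ha, rfl⟩, hxb, hba⟩
    · exact Or.inl ⟨a, b, hab, hxb, hba⟩
    · exact Or.inr ⟨hxb, hba.trans_le (le_runMax ha)⟩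
  · rintro (⟨a, b, hab, hxb, hba⟩ | ⟨hxv, hvM⟩)
    · exact ⟨a, b, Or.inl hab, hxb, hba⟩
    · obtain ⟨a, ha, hva⟩ := exists_lt_of_lt_runMax hvM
      exact ⟨a, v, Or.inr ⟨ha, rfl⟩, hxv, hva⟩

lemma mem_available201 : x ∈ available201 h ↔ x < runMax h ∧ ¬ Completes201 h x := by
  simp [available201]

lemma available201_nil : available201 [] = ∅ := by
  simp [available201, runMax]

lemma available201_append_of_le (hv : runMax h ≤ v) :
    available201 (h ++ [v]) = available201 h ∪ Finset.Ico (runMax h) v := by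
  ext x
  simp only [mem_available201, Finset.mem_union, Finset.mem_Ico, completes201_append_singleton,
    runMax_append_singleton, max_eq_right hv]
  constructor
  · rintro ⟨hxv, hx⟩
    by_cases hxM : x < runMax h
    · exact Or.inl ⟨hxM, fun hx' => hx (Or.inl hx')⟩
    · exact Or.inr ⟨by omega, hxv⟩
  · rintro (⟨hxM, hx⟩ | ⟨hMx, hxv⟩) <;> refine ⟨by omega, ?_⟩
    · rintro (hx' | ⟨hvx, -⟩) <;> [exact hx hx'; omega]
    · rintro (hx' | ⟨hvx, -⟩) <;> [exact hx'.lt_runMax.not_ge hMx; omega]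

lemma available201_append_of_lt (hv : v < runMax h) :
    available201 (h ++ [v]) = (available201 h).filter (· ≤ v) := by
  ext x
  simp only [mem_available201, Finset.mem_filter, completes201_append_singleton,
    runMax_append_singleton, max_eq_left hv.le]
  constructor
  · rintro ⟨hxM, hx⟩
    exact ⟨⟨hxM, fun hx' => hx (Or.inl hx')⟩,
      not_lt.1 fun hvx => hx (Or.inr ⟨hvx, hxM⟩)⟩
  · rintro ⟨⟨hxM, hx⟩, hxv⟩
    exact ⟨hxM, by rintro (hx' | ⟨hvx, -⟩) <;> [exact hx hx'; omega]⟩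

/-- `M` is the running maximum of the prefix read so far and `A` its `available201`. -/
def Avoids201From : ℕ → Finset ℕ → List ℕ → Prop
  | _, _, [] => True
  | M, A, v :: e =>
    if M ≤ v then Avoids201From v (A ∪ Finset.Ico M v) e
    else v ∈ A ∧ Avoids201From M (A.filter (· ≤ v)) e

/-- `M` is the running maximum of the prefix read so far and `L` its last entry that was below
the running maximum when it was read (`0` if there is none). -/
def Avoids210From : ℕ → ℕ → List ℕ → Prop
  | _, _, [] => True
  | M, L, v :: e => if M ≤ v then Avoids210From v L e else L ≤ v ∧ Avoids210From M v e

lemma avoids201From_iff :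
    Avoids201From (runMax h) (available201 h) e ↔ AvoidsAfter Completes201 h e := by
  induction e generalizing h with
  | nil => exact iff_of_true trivial (avoidsAfter_nil _ _)
  | cons v e ih =>
    rw [avoidsAfter_cons, Avoids201From, ← ih, runMax_append_singleton]
    split_ifs with hMv
    · rw [max_eq_right hMv, available201_append_of_le hMv, and_iff_right]
      exact fun hv => hv.lt_runMax.not_ge hMv
    · rw [not_le] at hMv
      rw [max_eq_left hMv.le, available201_append_of_lt hMv, mem_available201]
      simp [hMv]

lemma avoids210From_iff {L : ℕ} (hL : ∀ x, Completes210 h x ↔ x < L) :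
    Avoids210From (runMax h) L e ↔ AvoidsAfter Completes210 h e := by
  induction e generalizing h L with
  | nil => exact iff_of_true trivial (avoidsAfter_nil _ _)
  | cons v e ih =>
    rw [avoidsAfter_cons, Avoids210From]
    split_ifs with hMv
    · rw [← ih (h := h ++ [v]), runMax_append_singleton, max_eq_right hMv, and_iff_right]
      · exact fun hv => hv.lt_runMax.not_ge hMv
      intro x
      rw [completes210_append_singleton, hL]
      omega
    · rw [not_le] at hMv
      rw [hL, not_lt]
      refine and_congr_right fun hLv => ?_
      rw [← ih (h := h ++ [v]), runMax_append_singleton, max_eq_left hMv.le]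
      intro x
      rw [completes210_append_singleton, hL]
      omega

end Scan

section Rank

variable {A : Finset ℕ} {M r v : ℕ}

lemma finite_setOf_mem (A : Finset ℕ) : (Set.ofPred (· ∈ A)).Finite := A.finite_toSet

@[simp] lemma finite_setOf_mem_toFinset : (finite_setOf_mem A).toFinset = A := by
  ext; simp [Set.ofPred]

lemma count_lt_card_of_mem (hv : v ∈ A) : Nat.count (· ∈ A) v < A.card := by
  simpa using Nat.count_lt_card (finite_setOf_mem A) hv

lemma nth_mem_of_lt_card (hr : r < A.card) : Nat.nth (· ∈ A) r ∈ A :=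
  Nat.nth_mem_of_lt_card (finite_setOf_mem A) (by simpa using hr)

lemma count_nth_of_lt_card (hr : r < A.card) : Nat.count (· ∈ A) (Nat.nth (· ∈ A) r) = r :=
  Nat.count_nth_of_lt_card_finite (finite_setOf_mem A) (by simpa using hr)

lemma nth_lt_of_subset_range (hA : A ⊆ Finset.range M) (hM : 0 < M) :
    Nat.nth (· ∈ A) r < M := by
  by_cases hr : r < A.card
  · exact Finset.mem_range.1 (hA (nth_mem_of_lt_card hr))
  · rwa [Nat.nth_of_card_le (finite_setOf_mem A) (by simpa using hr)]

lemma card_filter_le_of_mem (hv : v ∈ A) :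
    (A.filter (· ≤ v)).card = Nat.count (· ∈ A) v + 1 := by
  rw [← Nat.count_succ_eq_succ_count_iff.2 hv, Nat.count_eq_card_filter_range]
  congr 1
  ext x
  simp [and_comm]

lemma card_union_Ico (hA : A ⊆ Finset.range M) :
    (A ∪ Finset.Ico M v).card = A.card + (v - M) := by
  rw [Finset.card_union_of_disjoint, Nat.card_Ico]
  exact Finset.disjoint_left.2 fun x hxA hx =>
    (Finset.mem_Ico.1 hx).1.not_gt (Finset.mem_range.1 (hA hxA))

lemma union_Ico_subset_range (hA : A ⊆ Finset.range M) (hMv : M ≤ v) :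
    A ∪ Finset.Ico M v ⊆ Finset.range v := by
  refine Finset.union_subset (hA.trans (Finset.range_subset_range.2 hMv)) fun x hx => ?_
  exact Finset.mem_range.2 (Finset.mem_Ico.1 hx).2

end Rank

def map201To210 : ℕ → Finset ℕ → List ℕ → List ℕ
  | _, _, [] => []
  | M, A, v :: e =>
    if M ≤ v then v :: map201To210 v (A ∪ Finset.Ico M v) e
    else (M - 1 - Nat.count (· ∈ A) v) :: map201To210 M (A.filter (· ≤ v)) e

noncomputable def map210To201 : ℕ → Finset ℕ → List ℕ → List ℕ
  | _, _, [] => []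
  | M, A, a :: e =>
    if M ≤ a then a :: map210To201 a (A ∪ Finset.Ico M a) e
    else Nat.nth (· ∈ A) (M - 1 - a) ::
      map210To201 M (A.filter (· ≤ Nat.nth (· ∈ A) (M - 1 - a))) e

section Bijection

variable {M L : ℕ} {A : Finset ℕ} {e : List ℕ}

theorem map201To210_spec (hA : A ⊆ Finset.range M) (hcard : A.card + L = M)
    (he : Avoids201From M A e) :
    Avoids210From M L (map201To210 M A e) ∧ map210To201 M A (map201To210 M A e) = e := by
  induction e generalizing M L A with
  | nil => exact ⟨trivial, rfl⟩
  | cons v e ih =>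
    by_cases hMv : M ≤ v
    · rw [Avoids201From, if_pos hMv] at he
      obtain ⟨h₁, h₂⟩ := ih (L := L) (union_Ico_subset_range hA hMv)
        (by rw [card_union_Ico hA]; omega) he
      rw [map201To210, if_pos hMv, Avoids210From, if_pos hMv, map210To201, if_pos hMv, h₂]
      exact ⟨h₁, rfl⟩
    · rw [Avoids201From, if_neg hMv] at he
      obtain ⟨hvA, he⟩ := he
      have hr := count_lt_card_of_mem hvA
      set r := Nat.count (· ∈ A) v
      obtain ⟨h₁, h₂⟩ := ih (L := M - 1 - r) ((Finset.filter_subset _ _).trans hA)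
        (by rw [card_filter_le_of_mem hvA]; omega) he
      have hidx : M - 1 - (M - 1 - r) = r := by omega
      rw [map201To210, if_neg hMv, Avoids210From, if_neg (by omega), map210To201,
        if_neg (by omega), hidx, Nat.nth_count hvA, h₂]
      exact ⟨⟨by omega, h₁⟩, rfl⟩

theorem map210To201_spec (hA : A ⊆ Finset.range M) (hcard : A.card + L = M)
    (he : Avoids210From M L e) :
    Avoids201From M A (map210To201 M A e) ∧ map201To210 M A (map210To201 M A e) = e := by
  induction e generalizing M L A with
  | nil => exact ⟨trivial, rfl⟩
  | cons a e ih =>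
    by_cases hMa : M ≤ a
    · rw [Avoids210From, if_pos hMa] at he
      obtain ⟨h₁, h₂⟩ := ih (L := L) (union_Ico_subset_range hA hMa)
        (by rw [card_union_Ico hA]; omega) he
      rw [map210To201, if_pos hMa, Avoids201From, if_pos hMa, map201To210, if_pos hMa, h₂]
      exact ⟨h₁, rfl⟩
    · rw [Avoids210From, if_neg hMa] at he
      obtain ⟨hLa, he⟩ := he
      have hr : M - 1 - a < A.card := by omega
      set w := Nat.nth (· ∈ A) (M - 1 - a)
      have hwA : w ∈ A := nth_mem_of_lt_card hr
      have hwM : ¬ M ≤ w := not_le.2 (Finset.mem_range.1 (hA hwA))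
      obtain ⟨h₁, h₂⟩ := ih (L := a) ((Finset.filter_subset _ _).trans hA)
        (by rw [card_filter_le_of_mem hwA, count_nth_of_lt_card hr]; omega) he
      rw [map210To201, if_neg hMa, Avoids201From, if_neg hwM, map201To210, if_neg hwM,
        count_nth_of_lt_card hr, h₂]
      exact ⟨⟨hwA, h₁⟩, by congr 1; omega⟩

lemma forall₂_map201To210 {s : List ℕ} (hs : s.Pairwise (· < ·)) (hM : ∀ b ∈ s, M ≤ b)
    (he : List.Forall₂ (· < ·) e s) : List.Forall₂ (· < ·) (map201To210 M A e) s := by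
  induction he generalizing M A with
  | nil => exact .nil
  | @cons v b e s hvb _ ih =>
    obtain ⟨hb, hs⟩ := List.pairwise_cons.1 hs
    rw [map201To210]
    split_ifs with hMv
    · exact .cons hvb (ih hs fun b' hb' => (hvb.trans (hb b' hb')).le)
    · have hMb := hM b List.mem_cons_self
      exact .cons (by omega) (ih hs fun b' hb' => hMb.trans (hb b' hb').le)

lemma forall₂_map210To201 {s : List ℕ} (hA : A ⊆ Finset.range M) (hs : s.Pairwise (· < ·))
    (hM : ∀ b ∈ s, M ≤ b) (he : List.Forall₂ (· < ·) e s) :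
    List.Forall₂ (· < ·) (map210To201 M A e) s := by
  induction he generalizing M A with
  | nil => exact .nil
  | @cons a b e s hab _ ih =>
    obtain ⟨hb, hs⟩ := List.pairwise_cons.1 hs
    rw [map210To201]
    split_ifs with hMa
    · exact .cons hab
        (ih (union_Ico_subset_range hA hMa) hs fun b' hb' => (hab.trans (hb b' hb')).le)
    · have hMb := hM b List.mem_cons_self
      exact .cons ((nth_lt_of_subset_range hA (by omega)).trans_le hMb)
        (ih ((Finset.filter_subset _ _).trans hA) hs fun b' hb' => hMb.trans (hb b' hb').le)

end Bijection

lemma mem_SInvSeq_iff {S : Finset ℕ} {e : List ℕ} :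
    e ∈ SInvSeq S ↔ List.Forall₂ (· < ·) e (S.sort (· ≤ ·)) := by
  simp only [SInvSeq, Set.mem_ofPred_eq, List.forall₂_iff_get, Finset.length_sort,
    List.get_eq_getElem]
  refine and_congr_right fun hlen => ⟨fun h i h₁ h₂ => ?_, fun h i hi => ?_⟩
  · simpa [getElem!_pos, h₁, h₂] using h i h₂
  · simpa [getElem!_pos, hi, hlen] using h i (by omega) (by simpa using hi)

lemma mem_SInvAvoid_201_iff {S : Finset ℕ} {e : List ℕ} :
    e ∈ SInvAvoid S [2, 0, 1] ↔
      List.Forall₂ (· < ·) e (S.sort (· ≤ ·)) ∧ Avoids201From 0 ∅ e := by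
  rw [SInvAvoid, Set.mem_ofPred_eq, mem_SInvSeq_iff, avoidsPat_201_iff, ← avoids201From_iff,
    available201_nil]
  rfl

lemma mem_SInvAvoid_210_iff {S : Finset ℕ} {e : List ℕ} :
    e ∈ SInvAvoid S [2, 1, 0] ↔
      List.Forall₂ (· < ·) e (S.sort (· ≤ ·)) ∧ Avoids210From 0 0 e := by
  rw [SInvAvoid, Set.mem_ofPred_eq, mem_SInvSeq_iff, avoidsPat_210_iff,
    ← avoids210From_iff (h := []) (L := 0) (by simp [Completes210])]
  rfl

theorem bijOn_map201To210 (S : Finset ℕ) :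
    Set.BijOn (map201To210 0 ∅) (SInvAvoid S [2, 0, 1]) (SInvAvoid S [2, 1, 0]) := by
  have hs : (S.sort (· ≤ ·)).Pairwise (· < ·) := (Finset.sortedLT_sort S).pairwise
  have h0 : ∀ b ∈ S.sort (· ≤ ·), 0 ≤ b := fun b _ => b.zero_le
  refine Set.InvOn.bijOn (f' := map210To201 0 ∅) ⟨fun e he => ?_, fun e he => ?_⟩
    (fun e he => ?_) (fun e he => ?_)
  · exact (map201To210_spec (L := 0) subset_rfl rfl (mem_SInvAvoid_201_iff.1 he).2).2
  · exact (map210To201_spec (A := ∅) (L := 0) subset_rfl rfl (mem_SInvAvoid_210_iff.1 he).2).2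
  · obtain ⟨hv, he⟩ := mem_SInvAvoid_201_iff.1 he
    exact mem_SInvAvoid_210_iff.2
      ⟨forall₂_map201To210 hs h0 hv, (map201To210_spec (L := 0) subset_rfl rfl he).1⟩
  · obtain ⟨hv, he⟩ := mem_SInvAvoid_210_iff.1 he
    exact mem_SInvAvoid_201_iff.2
      ⟨forall₂_map210To201 subset_rfl hs h0 hv,
        (map210To201_spec (L := 0) subset_rfl rfl he).1⟩

end InversionSeq

theorem stmt_1_general (S : Finset ℕ) :
    (SInvAvoid S [2, 1, 0]).ncard = (SInvAvoid S [2, 0, 1]).ncard :=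
  (InversionSeq.bijOn_map201To210 S).ncard_eq.symm

/-- Theorem: `|I_S(210)| = |I_S(201)|` for any finite set `S` of positive integers. -/
theorem stmt_1 (S : Finset ℕ) (hS : ∀ x ∈ S, 0 < x) :
    (SInvAvoid S [2, 1, 0]).ncard = (SInvAvoid S [2, 0, 1]).ncard :=
  stmt_1_general S
end

section
/- Let π = π_1⋯π_ℓ be a pattern of length ℓ ≥ 2 with π_i ∈ {0,1} for all i and with exactly one index j such that π_j = 0. Then for any integers j, k ≥ 0, the number of binary words of length j + k with exactly j zeros and k ones that avoid π equals the binomial coefficient C(j + min{k, ℓ−2}, j). -/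
/-!
A binary pattern with a single zero has the form `1^a 0 1^b` with `a + b = ℓ - 1 ≥ 1`. Since it
uses both letters, a binary word contains it up to order isomorphism exactly when it has
`1^a 0 1^b` itself as a subsequence. In a
word with `k` ones, label each zero by the number of ones before it: the word avoids `1^a 0 1^b`
iff no label lies in `[a, k - b]`, which leaves `min (k + 1) (a + b)` admissible labels. The labels
of the `j` zeros form an arbitrary multiset of admissible labels, so there are
`multichoose (min (k + 1) (a + b)) j = C(j + min k (ℓ - 2), j)` avoiders. Formally the count is
obtained by splitting on the first letter, which reproduces Pascal's rule for `multichoose`.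
-/

open List Finset

lemma List.cons_sublist_cons_iff_of_ne {α : Type*} {x y : α} {l t : List α} (h : x ≠ y) :
    x :: l <+ y :: t ↔ x :: l <+ t := by
  simp [sublist_cons_iff, h]

def IsBinary (w : List ℕ) : Prop := ∀ x ∈ w, x = 0 ∨ x = 1

lemma OrderIsoSeq.eq_of_isBinary {s p : List ℕ} (h : OrderIsoSeq s p) (hs : IsBinary s)
    (hp : IsBinary p) (h0 : 0 ∈ p) (h1 : 1 ∈ p) : s = p := by
  obtain ⟨hlen, hiso⟩ := h
  have lt_iff : ∀ n m (hn : n < s.length) (hm : m < s.length),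
      s[n] < s[m] ↔ p[n]'(hlen ▸ hn) < p[m]'(hlen ▸ hm) := fun n m hn hm => by
    simpa only [getElem!_pos s n hn, getElem!_pos s m hm, getElem!_pos p n (hlen ▸ hn),
      getElem!_pos p m (hlen ▸ hm)] using (hiso n m hn hm).1
  -- The entry of `s` facing a `1` of `p` exceeds another entry, so it is `1`; comparing every
  -- entry with it then recovers `p`.
  obtain ⟨i, hi, hpi⟩ := List.getElem_of_mem h0
  obtain ⟨i', hi', hpi'⟩ := List.getElem_of_mem h1
  have hsi' : s[i']'(hlen ▸ hi') = 1 := by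
    have := (lt_iff i i' (hlen ▸ hi) (hlen ▸ hi')).2 (by simp [hpi, hpi'])
    rcases hs _ (List.getElem_mem (hlen ▸ hi')) with h | h <;> omega
  refine List.ext_getElem hlen fun n hn hn' => ?_
  have := lt_iff n i' hn (hlen ▸ hi')
  rw [hsi', hpi'] at this
  rcases hs _ (List.getElem_mem hn) with h | h <;>
    rcases hp _ (List.getElem_mem hn') with h' | h' <;> omega

lemma containsPat_iff_sublist {w p : List ℕ} (hw : IsBinary w) (hp : IsBinary p)
    (h0 : 0 ∈ p) (h1 : 1 ∈ p) : ContainsPat w p ↔ p <+ w := by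
  refine ⟨fun ⟨s, hsw, hs⟩ => ?_, fun h => ⟨p, h, rfl, fun _ _ _ _ => ⟨Iff.rfl, Iff.rfl⟩⟩⟩
  rwa [← hs.eq_of_isBinary (fun x hx => hw x (hsw.subset hx)) hp h0 h1]

def singleZeroPattern (a b : ℕ) : List ℕ := replicate a 1 ++ 0 :: replicate b 1

lemma length_singleZeroPattern (a b : ℕ) : (singleZeroPattern a b).length = a + b + 1 := by
  simp [singleZeroPattern]
  omega

lemma singleZeroPattern_succ (a b : ℕ) :
    singleZeroPattern (a + 1) b = 1 :: singleZeroPattern a b := rfl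

lemma singleZeroPattern_zero (b : ℕ) :
    singleZeroPattern 0 b = 0 :: replicate b 1 := rfl

lemma exists_eq_singleZeroPattern {p : List ℕ} (hp : IsBinary p)
    (hzero : ∃! i : ℕ, i < p.length ∧ p[i]! = 0) : ∃ a b, p = singleZeroPattern a b := by
  obtain ⟨i, ⟨hi, hpi⟩, huniq⟩ := hzero
  rw [getElem!_pos p i hi] at hpi
  refine ⟨i, p.length - 1 - i, List.ext_getElem (by rw [length_singleZeroPattern]; omega)
    fun n hn hn' => ?_⟩
  simp only [singleZeroPattern, getElem_append, length_replicate, getElem_replicate, getElem_cons]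
  rcases hp _ (getElem_mem hn) with h | h
  · have := huniq n ⟨hn, by rwa [getElem!_pos p n hn]⟩
    grind
  · grind

lemma containsPat_singleZeroPattern_iff {w : List ℕ} {a b : ℕ} (hw : IsBinary w)
    (hab : 0 < a + b) :
    ContainsPat w (singleZeroPattern a b) ↔ singleZeroPattern a b <+ w := by
  refine containsPat_iff_sublist hw ?_ (by simp [singleZeroPattern]) ?_
  · simp [IsBinary, singleZeroPattern, or_imp, forall_and, mem_replicate]
  · simp [singleZeroPattern]
    omega

def binaryWords (j k : ℕ) : Finset (List ℕ) :=
  (replicate j 0 ++ replicate k 1).permutations.toFinset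

lemma mem_binaryWords {j k : ℕ} {w : List ℕ} :
    w ∈ binaryWords j k ↔ IsBinary w ∧ w.length = j + k ∧ w.count 0 = j ∧ w.count 1 = k := by
  have hperm := perm_replicate_append_replicate (l := w) (m := j) (n := k) zero_ne_one
  have hbin : w ⊆ [0, 1] ↔ IsBinary w := by simp [List.subset_def, IsBinary]
  rw [binaryWords, mem_toFinset, mem_permutations]
  exact ⟨fun h => ⟨hbin.1 (hperm.1 h).2.2, by simp [h.length_eq], (hperm.1 h).1, (hperm.1 h).2.1⟩,
    fun ⟨hw, _, h0, h1⟩ => hperm.2 ⟨h0, h1, hbin.2 hw⟩⟩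

lemma binaryWords_zero_left (k : ℕ) : binaryWords 0 k = {replicate k 1} := by
  ext; simp [binaryWords]

lemma binaryWords_zero_right (j : ℕ) : binaryWords j 0 = {replicate j 0} := by
  ext; simp [binaryWords]

lemma binaryWords_succ_succ (j k : ℕ) :
    binaryWords (j + 1) (k + 1) =
      (binaryWords j (k + 1)).image (cons 0) ∪ (binaryWords (j + 1) k).image (cons 1) := by
  ext w
  rcases w with _ | ⟨x, t⟩
  · simp [mem_binaryWords]
  simp only [mem_binaryWords, Finset.mem_union, Finset.mem_image, cons.injEq, IsBinary,
    List.forall_mem_cons, length_cons, count_cons]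
  constructor
  · rintro ⟨⟨rfl | rfl, ht⟩, hl, h0, h1⟩
    · exact Or.inl ⟨t, ⟨ht, by simp_all; omega⟩, rfl, rfl⟩
    · exact Or.inr ⟨t, ⟨ht, by simp_all; omega⟩, rfl, rfl⟩
  · rintro (⟨t, ht, rfl, rfl⟩ | ⟨t, ht, rfl, rfl⟩) <;> simp_all <;> omega

lemma card_filter_binaryWords_succ_succ (P : List ℕ → Prop) [DecidablePred P] (j k : ℕ) :
    #((binaryWords (j + 1) (k + 1)).filter P) =
      #((binaryWords j (k + 1)).filter (fun t => P (0 :: t))) +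
        #((binaryWords (j + 1) k).filter (fun t => P (1 :: t))) := by
  rw [binaryWords_succ_succ, filter_union, filter_image, filter_image,
    card_union_of_disjoint (Finset.disjoint_left.2 (by grind)),
    card_image_of_injective _ cons_injective, card_image_of_injective _ cons_injective]

def avoiders (a b j k : ℕ) : Finset (List ℕ) :=
  (binaryWords j k).filter fun w => ¬ singleZeroPattern a b <+ w

lemma count_one_singleZeroPattern (a b : ℕ) : (singleZeroPattern a b).count 1 = a + b := by
  simp [singleZeroPattern]

lemma avoiders_eq_binaryWords_of_lt {a b j k : ℕ} (hk : k < a + b) :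
    avoiders a b j k = binaryWords j k :=
  filter_true_of_mem fun w hw hsub => by
    have := hsub.count_le 1
    rw [count_one_singleZeroPattern, (mem_binaryWords.1 hw).2.2.2] at this
    omega

lemma card_avoiders_zero_left (a b k : ℕ) : #(avoiders a b 0 k) = 1 := by
  rw [avoiders, binaryWords_zero_left, Finset.filter_singleton, if_pos, card_singleton]
  intro h
  simpa using h.subset (show 0 ∈ singleZeroPattern a b by simp [singleZeroPattern])

lemma card_avoiders_zero_right (a b j : ℕ) :
    #(avoiders a b j 0) = (min 1 (a + b)).multichoose j := by
  rcases Nat.eq_zero_or_pos (a + b) with hab | hab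
  · obtain ⟨rfl, rfl⟩ : a = 0 ∧ b = 0 := by omega
    cases j <;> simp [avoiders, binaryWords_zero_right, Finset.filter_singleton, singleZeroPattern,
      replicate_succ]
  · rw [avoiders_eq_binaryWords_of_lt hab, binaryWords_zero_right, card_singleton,
      show min 1 (a + b) = 1 by omega, Nat.multichoose_one]

lemma singleZeroPattern_succ_sublist_one_cons_iff (a b : ℕ) (t : List ℕ) :
    singleZeroPattern (a + 1) b <+ 1 :: t ↔ singleZeroPattern a b <+ t :=
  cons_sublist_cons

lemma singleZeroPattern_succ_sublist_zero_cons_iff (a b : ℕ) (t : List ℕ) :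
    singleZeroPattern (a + 1) b <+ 0 :: t ↔ singleZeroPattern (a + 1) b <+ t :=
  cons_sublist_cons_iff_of_ne one_ne_zero

lemma singleZeroPattern_zero_sublist_one_cons_iff (b : ℕ) (t : List ℕ) :
    singleZeroPattern 0 b <+ 1 :: t ↔ singleZeroPattern 0 b <+ t :=
  cons_sublist_cons_iff_of_ne zero_ne_one

lemma singleZeroPattern_zero_sublist_zero_cons_iff (b : ℕ) (t : List ℕ) :
    singleZeroPattern 0 b <+ 0 :: t ↔ b ≤ t.count 1 := by
  rw [singleZeroPattern_zero, cons_sublist_cons, replicate_sublist_iff]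

lemma card_avoiders_succ_succ_succ (a b j k : ℕ) :
    #(avoiders (a + 1) b (j + 1) (k + 1)) =
      #(avoiders (a + 1) b j (k + 1)) + #(avoiders a b (j + 1) k) := by
  rw [avoiders, card_filter_binaryWords_succ_succ]
  simp only [singleZeroPattern_succ_sublist_zero_cons_iff,
    singleZeroPattern_succ_sublist_one_cons_iff, avoiders]

lemma card_avoiders_zero_succ_succ_of_lt {b j k : ℕ} (hk : k + 1 < b) :
    #(avoiders 0 b (j + 1) (k + 1)) = #(avoiders 0 b j (k + 1)) + #(avoiders 0 b (j + 1) k) := by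
  rw [avoiders, card_filter_binaryWords_succ_succ, avoiders_eq_binaryWords_of_lt (by omega),
    filter_true_of_mem fun t ht => ?_]
  · simp only [singleZeroPattern_zero_sublist_one_cons_iff, avoiders]
  · rw [singleZeroPattern_zero_sublist_zero_cons_iff, (mem_binaryWords.1 ht).2.2.2]
    omega

lemma card_avoiders_zero_succ_succ_of_le {b j k : ℕ} (hk : b ≤ k + 1) :
    #(avoiders 0 b (j + 1) (k + 1)) = #(avoiders 0 b (j + 1) k) := by
  rw [avoiders, card_filter_binaryWords_succ_succ, filter_false_of_mem fun t ht => ?_, card_empty,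
    zero_add]
  · simp only [singleZeroPattern_zero_sublist_one_cons_iff, avoiders]
  · rw [singleZeroPattern_zero_sublist_zero_cons_iff, (mem_binaryWords.1 ht).2.2.2, not_not]
    exact hk

theorem card_avoiders : ∀ a b j k : ℕ, #(avoiders a b j k) = (min (k + 1) (a + b)).multichoose j
  | a, b, 0, k => by rw [card_avoiders_zero_left, Nat.multichoose_zero_right]
  | a, b, j + 1, 0 => card_avoiders_zero_right a b (j + 1)
  | a + 1, b, j + 1, k + 1 => by
    rw [card_avoiders_succ_succ_succ, card_avoiders, card_avoiders,
      show min (k + 1 + 1) (a + 1 + b) = min (k + 1) (a + b) + 1 by omega,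
      Nat.multichoose_succ_succ (min (k + 1) (a + b)) j, add_comm]
  | 0, b, j + 1, k + 1 => by
    rcases lt_or_ge (k + 1) b with hk | hk
    · rw [card_avoiders_zero_succ_succ_of_lt hk, card_avoiders, card_avoiders,
        show min (k + 1 + 1) (0 + b) = (k + 1) + 1 by omega,
        show min (k + 1) (0 + b) = k + 1 by omega, Nat.multichoose_succ_succ (k + 1) j, add_comm]
    · rw [card_avoiders_zero_succ_succ_of_le hk, card_avoiders,
        show min (k + 1 + 1) (0 + b) = min (k + 1) (0 + b) by omega]
termination_by _ _ j k => j + k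

/-- Theorem: if `p` is a pattern of length `ℓ ≥ 2` with all entries in `{0,1}` and exactly
one entry equal to `0`, then the number of binary words with `j` zeros and `k` ones
avoiding `p` is `C(j + min{k, ℓ-2}, j)`. -/
theorem stmt_3 (p : List ℕ) (hlen : 2 ≤ p.length)
    (hbin : ∀ x ∈ p, x = 0 ∨ x = 1)
    (hzero : ∃! i : ℕ, i < p.length ∧ p[i]! = 0)
    (j k : ℕ) :
    {w : List ℕ | (∀ x ∈ w, x = 0 ∨ x = 1) ∧ w.length = j + k ∧
      w.count 0 = j ∧ w.count 1 = k ∧ AvoidsPat w p}.ncard =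
      (j + min k (p.length - 2)).choose j := by
  obtain ⟨a, b, rfl⟩ := exists_eq_singleZeroPattern hbin hzero
  rw [length_singleZeroPattern] at hlen ⊢
  have hset : {w : List ℕ | (∀ x ∈ w, x = 0 ∨ x = 1) ∧ w.length = j + k ∧
      w.count 0 = j ∧ w.count 1 = k ∧ AvoidsPat w (singleZeroPattern a b)} = avoiders a b j k := by
    ext w
    simp only [Set.mem_ofPred_eq, avoiders, coe_filter, mem_binaryWords, AvoidsPat, and_assoc]
    refine and_congr_right fun hw => ?_
    rw [containsPat_singleZeroPattern_iff hw (by omega)]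
  rw [hset, Set.ncard_coe_finset, card_avoiders, Nat.multichoose_eq]
  congr 1
  omega
end

section
/- For any finite set S of positive integers, the numbers of S-inversion sequences avoiding the patterns 1011, 1101, and 1110 are all equal; i.e. |I_S(1011)| = |I_S(1101)| = |I_S(1110)|. -/
/-!
Read a sequence from its largest value `v` down. The positions of `v` form a binary word `w` and
the other entries a sequence with smaller values. An occurrence of `1^i 0 1^j` either has `v` as
its large value, and is then an occurrence of the binary word `1^i 0 1^j` in `w`, or it lives among
the smaller values. So a bijection `g` between binary words avoiding the two patterns, applied to
the word of every value in turn, transports avoiders of one pattern to avoiders of the other.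

For sorted bounds `s₁ ≤ ⋯ ≤ sₙ`, the condition `eₖ < sₖ` says that the first `#{k | sₖ ≤ u}`
entries are smaller than `u`, for every `u`; this survives as long as `g` permutes letters and
never moves the first `true` to the left. The maps `t ++ true :: r ↦ t ++ true :: h r`, with `t`
all `false`, do this, and they reduce `1^(i+1) 0 1^j` in the word to `1^i 0 1^j` in `r`. Reversal
exchanges the `r` avoiding `011` and `110`, and sorting those avoiding `01` and `10`; this gives
`1011 ↔ 1110` and `1101 ↔ 1110`.
-/

open List Set

section DipWord

variable {α : Type*} {i j : ℕ}

/-- `dipWord 1 0 i j` is the pattern `1^i 0 1^j`. -/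
def dipWord (a b : α) (i j : ℕ) : List α := replicate i a ++ b :: replicate j a

@[simp] lemma length_dipWord (a b : α) (i j : ℕ) : (dipWord a b i j).length = i + 1 + j := by
  simp [dipWord]; omega

@[simp] lemma map_dipWord {β : Type*} (f : α → β) (a b : α) (i j : ℕ) :
    (dipWord a b i j).map f = dipWord (f a) (f b) i j := by
  simp [dipWord]

@[simp] lemma reverse_dipWord (a b : α) (i j : ℕ) :
    (dipWord a b i j).reverse = dipWord a b j i := by
  simp [dipWord]

lemma eq_or_eq_of_mem_dipWord {a b y : α} (h : y ∈ dipWord a b i j) : y = a ∨ y = b := by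
  simp only [dipWord, mem_append, mem_replicate, mem_cons] at h
  tauto

lemma mem_dipWord_left (hij : 0 < i + j) (a b : α) : a ∈ dipWord a b i j := by
  simp [dipWord]
  omega

lemma getElem!_dipWord [Inhabited α] (a b : α) {k : ℕ} (hk : k < i + 1 + j) :
    (dipWord a b i j)[k]! = if k = i then b else a := by
  unfold dipWord
  rw [getElem!_pos _ _ (by simp; omega), getElem_append]
  simp only [length_replicate]
  split_ifs with h1 h2 h2
  · omega
  · simp
  · simp [h2]
  · obtain ⟨m, hm⟩ : ∃ m, k - i = m + 1 := ⟨k - i - 1, by omega⟩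
    simp [hm]

end DipWord

def ContainsDip (i j : ℕ) (e : List ℕ) : Prop :=
  ∃ b x, x < b ∧ dipWord b x i j <+ e

section ContainsDip

variable {i j : ℕ}

lemma orderIsoSeq_dipWord {b x : ℕ} (hx : x < b) :
    OrderIsoSeq (dipWord b x i j) (dipWord 1 0 i j) := by
  refine ⟨by simp, fun k l hk hl => ?_⟩
  simp only [length_dipWord] at hk hl
  rw [getElem!_dipWord _ _ hk, getElem!_dipWord _ _ hl, getElem!_dipWord _ _ hk,
    getElem!_dipWord _ _ hl]
  split_ifs <;> simp <;> omega

lemma eq_dipWord_of_orderIsoSeq {s : List ℕ} (h : OrderIsoSeq s (dipWord 1 0 i j)) :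
    ∃ b x, x < b ∧ s = dipWord b x i j := by
  obtain ⟨hlen, hiso⟩ := h
  simp only [length_dipWord] at hlen
  have hP : ∀ k < i + 1 + j, (dipWord 1 0 i j)[k]! = if k = i then 0 else 1 :=
    fun k hk => getElem!_dipWord 1 0 hk
  by_cases hij : i + j = 0
  · obtain ⟨rfl, rfl⟩ : i = 0 ∧ j = 0 := by omega
    match s, hlen with
    | [y], _ => exact ⟨y + 1, y, by omega, rfl⟩
  obtain ⟨k₀, hk₀, hk₀i⟩ : ∃ k₀ < i + 1 + j, k₀ ≠ i :=
    ⟨if i = 0 then 1 else 0, by split_ifs <;> omega, by split_ifs <;> omega⟩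
  refine ⟨s[k₀]!, s[i]!, ?_, ext_getElem (by simp [hlen]) fun k hk _ => ?_⟩
  · have := (hiso i k₀ (by omega) (by omega)).1
    rw [hP i (by omega), hP k₀ hk₀] at this
    simpa [hk₀i] using this
  · rw [← getElem!_pos s k hk, ← getElem!_pos, getElem!_dipWord _ _ (by omega)]
    split_ifs with hki
    · rw [hki]
    · have := (hiso k k₀ hk (by omega)).2
      rw [hP k (by omega), hP k₀ hk₀] at this
      simpa [hki, hk₀i] using this

theorem containsPat_dipWord_iff {e : List ℕ} :
    ContainsPat e (dipWord 1 0 i j) ↔ ContainsDip i j e := by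
  constructor
  · rintro ⟨s, hs, hiso⟩
    obtain ⟨b, x, hx, rfl⟩ := eq_dipWord_of_orderIsoSeq hiso
    exact ⟨b, x, hx, hs⟩
  · rintro ⟨b, x, hx, hs⟩
    exact ⟨_, hs, orderIsoSeq_dipWord hx⟩

lemma not_containsDip_of_forall_le_zero (hij : 0 < i + j) {e : List ℕ} (he : ∀ x ∈ e, x ≤ 0) :
    ¬ ContainsDip i j e := by
  rintro ⟨b, x, hxb, hs⟩
  have := he b (hs.subset (mem_dipWord_left hij b x))
  omega

end ContainsDip

def mask (v : ℕ) (e : List ℕ) : List Bool := e.map (· == v)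

/-- Inverse of `e ↦ (mask v e, e.filter (· != v))`. -/
def fill (v : ℕ) : List Bool → List ℕ → List ℕ
  | [], _ => []
  | true :: w, f => v :: fill v w f
  | false :: w, x :: f => x :: fill v w f
  | false :: _, [] => []

lemma length_filter_ne (v : ℕ) (e : List ℕ) :
    (e.filter (· != v)).length = (mask v e).count false := by
  induction e with
  | nil => rfl
  | cons a e ih => by_cases h : a = v <;> simp_all [mask, count_cons]

lemma fill_mask_filter (v : ℕ) (e : List ℕ) : fill v (mask v e) (e.filter (· != v)) = e := by
  induction e with
  | nil => rfl
  | cons a e ih =>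
    by_cases h : a = v
    · subst h; simpa [mask, fill] using ih
    · have hav : (a == v) = false := by simpa using h
      simpa [mask, fill, filter_cons, hav, h] using ih

section Fill

variable {v : ℕ}

lemma fill_perm {w : List Bool} {f : List ℕ} (hf : f.length = w.count false) :
    fill v w f ~ replicate (w.count true) v ++ f := by
  induction w generalizing f with
  | nil => cases f <;> simp_all [fill]
  | cons b w ih =>
    cases b with
    | true => simpa [fill, count_cons, replicate_succ] using ih (by simpa using hf)
    | false =>
      obtain ⟨x, f, rfl⟩ := exists_cons_of_length_eq_add_one (by simpa using hf)
      simp only [fill, count_cons]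
      exact ((ih (by simpa using hf)).cons x).trans perm_middle.symm

lemma mask_fill {w : List Bool} {f : List ℕ} (hv : v ∉ f) (hf : f.length = w.count false) :
    mask v (fill v w f) = w := by
  induction w generalizing f with
  | nil => rfl
  | cons b w ih =>
    cases b with
    | true => simpa [mask, fill] using ih hv (by simpa using hf)
    | false =>
      obtain ⟨x, f, rfl⟩ := exists_cons_of_length_eq_add_one (by simpa using hf)
      have hx : x ≠ v := fun h => hv (h ▸ mem_cons_self)
      simpa [mask, fill, hx] using ih (fun h => hv (mem_cons_of_mem x h)) (by simpa using hf)

lemma filter_fill {w : List Bool} {f : List ℕ} (hv : v ∉ f) (hf : f.length = w.count false) :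
    (fill v w f).filter (· != v) = f := by
  induction w generalizing f with
  | nil => cases f <;> simp_all [fill]
  | cons b w ih =>
    cases b with
    | true => simpa [fill] using ih hv (by simpa using hf)
    | false =>
      obtain ⟨x, f, rfl⟩ := exists_cons_of_length_eq_add_one (by simpa using hf)
      have hx : x ≠ v := fun h => hv (h ▸ mem_cons_self)
      simpa [fill, filter_cons, hx] using
        ih (fun h => hv (mem_cons_of_mem x h)) (by simpa using hf)

lemma forall_le_of_mem_filter_ne {c : ℕ} {e : List ℕ} (he : ∀ x ∈ e, x ≤ c + 1) :
    ∀ x ∈ e.filter (· != c + 1), x ≤ c := fun x hx => by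
  have hx' := mem_filter.1 hx
  have := he x hx'.1
  simp only [bne_iff_ne, ne_eq] at hx'
  omega

lemma eq_replicate_of_map_beq {l : List ℕ} {n : ℕ} (h : l.map (· == v) = replicate n true) :
    l = replicate n v := by
  rw [eq_replicate_iff]
  refine ⟨by simpa using congrArg length h, fun y hy => ?_⟩
  have : (y == v) ∈ replicate n true := h ▸ mem_map_of_mem hy
  simpa using eq_of_mem_replicate this

lemma not_mem_take_iff_mask {k : ℕ} {e : List ℕ} :
    v ∉ e.take k ↔ true ∉ (mask v e).take k := by
  simp [mask, ← map_take]

end Fill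

theorem containsDip_iff_mask_or_filter {i j v : ℕ} (hij : 0 < i + j) {e : List ℕ}
    (he : ∀ x ∈ e, x ≤ v) :
    ContainsDip i j e ↔
      dipWord true false i j <+ mask v e ∨ ContainsDip i j (e.filter (· != v)) := by
  constructor
  · rintro ⟨b, x, hxb, hs⟩
    rcases (he b (hs.subset (mem_dipWord_left hij b x))).lt_or_eq with hbv | rfl
    · refine Or.inr ⟨b, x, hxb, ?_⟩
      have hne : (dipWord b x i j).filter (· != v) = dipWord b x i j :=
        filter_eq_self.2 fun y hy => by
          rcases eq_or_eq_of_mem_dipWord hy with rfl | rfl <;> simp <;> omega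
      exact hne ▸ hs.filter _
    · have hx : (x == b) = false := by simpa using hxb.ne
      simpa [mask, hx] using Or.inl (hs.map (· == b))
  · rintro (h | ⟨b, x, hxb, hs⟩)
    · obtain ⟨l, hl, hmap⟩ := sublist_map_iff.1 h
      obtain ⟨l₁, l₂, rfl, h₁, h₂⟩ := map_eq_append_iff.1 hmap.symm
      obtain ⟨x, l₃, rfl, hx, h₃⟩ := map_eq_cons_iff.1 h₂
      have hxv : x < v := lt_of_le_of_ne (he x (hl.subset (by simp))) (by simpa using hx)
      refine ⟨v, x, hxv, ?_⟩
      rwa [dipWord, ← eq_replicate_of_map_beq h₁, ← eq_replicate_of_map_beq h₃]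
    · exact ⟨b, x, hxb, hs.trans filter_sublist⟩

def Fits (m : ℕ → ℕ) (e : List ℕ) : Prop := ∀ u, ∀ x ∈ e.take (m u), x < u

section Fits

variable {m : ℕ → ℕ} {v : ℕ} {e : List ℕ}

lemma take_filter_ne {k k' : ℕ} (h : v ∉ e.take k) (hk : k' ≤ k) :
    (e.filter (· != v)).take k' = e.take k' := by
  induction e generalizing k k' with
  | nil => simp
  | cons a e ih =>
    obtain _ | k := k
    · simp [Nat.le_zero.1 hk]
    obtain _ | k' := k'
    · simp
    have ha : a ≠ v := fun hav => h (by simp [hav])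
    simpa [ha] using ih (k := k) (fun hv => h (by simp [hv])) (by omega : k' ≤ k)

lemma Fits.forall_lt (h : Fits m e) {u : ℕ} (hu : e.length ≤ m u) : ∀ x ∈ e, x < u :=
  take_of_length_le hu ▸ h u

theorem fits_iff_filter (hm : Monotone m) (he : ∀ x ∈ e, x ≤ v) :
    Fits m e ↔ v ∉ e.take (m v) ∧ Fits m (e.filter (· != v)) := by
  constructor
  · intro h
    have hv : v ∉ e.take (m v) := fun hv => (h v v hv).false
    refine ⟨hv, fun u x hx => ?_⟩
    rcases le_or_gt u v with huv | hvu
    · rw [take_filter_ne hv (hm huv)] at hx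
      exact h u x hx
    · have hx' := mem_filter.1 (mem_of_mem_take hx)
      have := he x hx'.1
      simp only [bne_iff_ne, ne_eq] at hx'
      omega
  · rintro ⟨hv, h⟩ u x hx
    rcases le_or_gt u v with huv | hvu
    · rw [← take_filter_ne hv (hm huv)] at hx
      exact h u x hx
    · exact (he x (mem_of_mem_take hx)).trans_lt hvu

end Fits

lemma getElem_le_iff_lt_countP {L : List ℕ} (hL : L.Pairwise (· ≤ ·)) {k u : ℕ}
    (hk : k < L.length) : L[k] ≤ u ↔ k < L.countP (· ≤ u) := by
  induction L generalizing k with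
  | nil => simp at hk
  | cons a L ih =>
    obtain ⟨haL, hL⟩ := pairwise_cons.1 hL
    by_cases hau : a ≤ u
    · obtain _ | k := k
      · simp [hau]
      · simp [hau, ih hL (Nat.lt_of_succ_lt_succ hk)]
    · have h0 : L.countP (· ≤ u) = 0 :=
        countP_eq_zero.2 fun b hb => by simpa using lt_of_lt_of_le (not_le.1 hau) (haL b hb)
      obtain _ | k := k
      · simp [hau, h0]
      · have := haL _ (getElem_mem (Nat.lt_of_succ_lt_succ hk))
        simp [hau, h0]
        omega

theorem forall_getElem!_lt_iff_fits {L e : List ℕ} (hL : L.Pairwise (· ≤ ·))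
    (he : e.length = L.length) :
    (∀ k < L.length, e[k]! < L[k]!) ↔ Fits (fun u => L.countP (· ≤ u)) e := by
  constructor
  · intro h u x hx
    obtain ⟨k, hk, rfl⟩ := mem_take_iff_getElem.1 hx
    have hkL : k < L.length := he ▸ (lt_min_iff.1 hk).2
    have := h k hkL
    rw [getElem!_pos e k (by omega), getElem!_pos L k hkL] at this
    exact this.trans_le ((getElem_le_iff_lt_countP hL hkL).2 (lt_min_iff.1 hk).1)
  · intro h k hk
    rw [getElem!_pos e k (by omega), getElem!_pos L k hk]
    exact h _ _ (mem_take_iff_getElem.2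
      ⟨k, lt_min ((getElem_le_iff_lt_countP hL hk).1 le_rfl) (by omega), rfl⟩)

def Avoiding (p : List Bool) : Set (List Bool) := {w | ¬ p <+ w}

structure IsPermBijOn (p q : List Bool) (g g' : List Bool → List Bool) : Prop where
  perm : ∀ w, g w ~ w
  perm' : ∀ w, g' w ~ w
  mapsTo : MapsTo g (Avoiding p) (Avoiding q)
  mapsTo' : MapsTo g' (Avoiding q) (Avoiding p)
  invOn : InvOn g' g (Avoiding p) (Avoiding q)

lemma IsPermBijOn.symm {p q : List Bool} {g g' : List Bool → List Bool}
    (h : IsPermBijOn p q g g') : IsPermBijOn q p g' g :=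
  ⟨h.perm', h.perm, h.mapsTo', h.mapsTo, h.invOn.symm⟩

def KeepsFirstTrue (g : List Bool → List Bool) : Prop :=
  ∀ w k, true ∉ w.take k → true ∉ (g w).take k

def levelMap (g : List Bool → List Bool) : ℕ → List ℕ → List ℕ
  | 0, e => e
  | c + 1, e => fill (c + 1) (g (mask (c + 1) e)) (levelMap g c (e.filter (· != c + 1)))

section LevelMap

variable {g g' : List Bool → List Bool} {i j i' j' : ℕ}

lemma levelMap_perm (hg : ∀ w, g w ~ w) (c : ℕ) (e : List ℕ) : levelMap g c e ~ e := by
  induction c generalizing e with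
  | zero => rfl
  | succ c ih =>
    have hf := length_filter_ne (c + 1) e
    calc levelMap g (c + 1) e
        ~ replicate ((g (mask (c + 1) e)).count true) (c + 1) ++
            levelMap g c (e.filter (· != c + 1)) :=
          fill_perm (by rw [(ih _).length_eq, hf, (hg _).count_eq])
      _ ~ replicate ((mask (c + 1) e).count true) (c + 1) ++ e.filter (· != c + 1) := by
          rw [(hg _).count_eq]; exact (ih _).append_left _
      _ ~ fill (c + 1) (mask (c + 1) e) (e.filter (· != c + 1)) := (fill_perm hf).symm
      _ = e := fill_mask_filter _ _

lemma mask_filter_levelMap_succ (hg : ∀ w, g w ~ w) (c : ℕ) (e : List ℕ) :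
    mask (c + 1) (levelMap g (c + 1) e) = g (mask (c + 1) e) ∧
      (levelMap g (c + 1) e).filter (· != c + 1) = levelMap g c (e.filter (· != c + 1)) := by
  have hv : c + 1 ∉ levelMap g c (e.filter (· != c + 1)) := fun h => by
    simpa using (levelMap_perm hg c _).subset h
  have hf : (levelMap g c (e.filter (· != c + 1))).length =
      (g (mask (c + 1) e)).count false := by
    rw [(levelMap_perm hg c _).length_eq, length_filter_ne, (hg _).count_eq]
  exact ⟨mask_fill hv hf, filter_fill hv hf⟩

theorem levelMap_leftInv (hg : ∀ w, g w ~ w) (hij : 0 < i + j)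
    (hinv : LeftInvOn g' g (Avoiding (dipWord true false i j))) (c : ℕ) (e : List ℕ)
    (he : ∀ x ∈ e, x ≤ c) (hav : ¬ ContainsDip i j e) :
    levelMap g' c (levelMap g c e) = e := by
  induction c generalizing e with
  | zero => rfl
  | succ c ih =>
    rw [containsDip_iff_mask_or_filter hij he, not_or] at hav
    obtain ⟨hmask, hfilter⟩ := mask_filter_levelMap_succ hg c e
    change fill (c + 1) (g' (mask (c + 1) _)) (levelMap g' c (List.filter _ _)) = e
    rw [hmask, hfilter, hinv hav.1, ih _ (forall_le_of_mem_filter_ne he) hav.2,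
      fill_mask_filter]

theorem levelMap_not_containsDip (hg : ∀ w, g w ~ w) (hij : 0 < i + j) (hij' : 0 < i' + j')
    (hmaps : MapsTo g (Avoiding (dipWord true false i j)) (Avoiding (dipWord true false i' j')))
    (c : ℕ) (e : List ℕ) (he : ∀ x ∈ e, x ≤ c) (hav : ¬ ContainsDip i j e) :
    ¬ ContainsDip i' j' (levelMap g c e) := by
  induction c generalizing e with
  | zero => exact not_containsDip_of_forall_le_zero hij' he
  | succ c ih =>
    rw [containsDip_iff_mask_or_filter hij he, not_or] at hav
    obtain ⟨hmask, hfilter⟩ := mask_filter_levelMap_succ hg c e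
    rw [containsDip_iff_mask_or_filter hij' fun x hx => he x ((levelMap_perm hg _ e).subset hx),
      hmask, hfilter, not_or]
    exact ⟨hmaps hav.1, ih _ (forall_le_of_mem_filter_ne he) hav.2⟩

theorem levelMap_fits (hg : ∀ w, g w ~ w) (hg₁ : KeepsFirstTrue g) {m : ℕ → ℕ}
    (hm : Monotone m) (c : ℕ) (e : List ℕ) (he : ∀ x ∈ e, x ≤ c) (hfit : Fits m e) :
    Fits m (levelMap g c e) := by
  induction c generalizing e with
  | zero => exact hfit
  | succ c ih =>
    rw [fits_iff_filter hm he, not_mem_take_iff_mask] at hfit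
    obtain ⟨hmask, hfilter⟩ := mask_filter_levelMap_succ hg c e
    rw [fits_iff_filter hm fun x hx => he x ((levelMap_perm hg _ e).subset hx),
      not_mem_take_iff_mask, hmask, hfilter]
    exact ⟨hg₁ _ _ hfit.1, ih _ (forall_le_of_mem_filter_ne he) hfit.2⟩

end LevelMap

def FitAvoiders (n : ℕ) (m : ℕ → ℕ) (i j : ℕ) : Set (List ℕ) :=
  {e | e.length = n ∧ Fits m e ∧ ¬ ContainsDip i j e}

section FitAvoiders

variable {g g' : List Bool → List Bool} {i j i' j' n c : ℕ} {m : ℕ → ℕ}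

lemma forall_le_of_mem_fitAvoiders (hn : n ≤ m (c + 1)) {e : List ℕ}
    (he : e ∈ FitAvoiders n m i j) : ∀ x ∈ e, x ≤ c :=
  fun x hx => Nat.le_of_lt_succ (he.2.1.forall_lt (he.1 ▸ hn) x hx)

lemma mapsTo_levelMap (hm : Monotone m) (hn : n ≤ m (c + 1)) (hij : 0 < i + j)
    (hij' : 0 < i' + j') (hg : IsPermBijOn (dipWord true false i j) (dipWord true false i' j') g g')
    (hg₁ : KeepsFirstTrue g) :
    MapsTo (levelMap g c) (FitAvoiders n m i j) (FitAvoiders n m i' j') := fun e he =>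
  have hle := forall_le_of_mem_fitAvoiders hn he
  ⟨(levelMap_perm hg.perm c e).length_eq.trans he.1, levelMap_fits hg.perm hg₁ hm c e hle he.2.1,
    levelMap_not_containsDip hg.perm hij hij' hg.mapsTo c e hle he.2.2⟩

lemma leftInvOn_levelMap (hn : n ≤ m (c + 1)) (hij : 0 < i + j)
    (hg : IsPermBijOn (dipWord true false i j) (dipWord true false i' j') g g') :
    LeftInvOn (levelMap g' c) (levelMap g c) (FitAvoiders n m i j) := fun e he =>
  levelMap_leftInv hg.perm hij hg.invOn.1 c e (forall_le_of_mem_fitAvoiders hn he) he.2.2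

theorem ncard_fitAvoiders_eq (hm : Monotone m) (hn : n ≤ m (c + 1)) (hij : 0 < i + j)
    (hij' : 0 < i' + j') (hg : IsPermBijOn (dipWord true false i j) (dipWord true false i' j') g g')
    (hg₁ : KeepsFirstTrue g) (hg₁' : KeepsFirstTrue g') :
    (FitAvoiders n m i j).ncard = (FitAvoiders n m i' j').ncard :=
  (InvOn.bijOn ⟨leftInvOn_levelMap hn hij hg, leftInvOn_levelMap hn hij' hg.symm⟩
    (mapsTo_levelMap hm hn hij hij' hg hg₁) (mapsTo_levelMap hm hn hij' hij hg.symm hg₁')).ncard_eq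

end FitAvoiders

lemma sInvAvoid_eq_fitAvoiders (S : Finset ℕ) (i j : ℕ) :
    SInvAvoid S (dipWord 1 0 i j) =
      FitAvoiders S.card (fun u => (S.sort (· ≤ ·)).countP (· ≤ u)) i j := by
  ext e
  simp only [SInvAvoid, SInvSeq, FitAvoiders, AvoidsPat, containsPat_dipWord_iff, mem_ofPred_eq,
    and_assoc, and_congr_right_iff]
  intro he
  rw [← forall_getElem!_lt_iff_fits (S.pairwise_sort _) (by simp [he]), Finset.length_sort]

theorem ncard_sInvAvoid_eq {i j i' j' : ℕ} {g g' : List Bool → List Bool} (S : Finset ℕ)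
    (hij : 0 < i + j) (hij' : 0 < i' + j')
    (hg : IsPermBijOn (dipWord true false i j) (dipWord true false i' j') g g')
    (hg₁ : KeepsFirstTrue g) (hg₁' : KeepsFirstTrue g') :
    (SInvAvoid S (dipWord 1 0 i j)).ncard = (SInvAvoid S (dipWord 1 0 i' j')).ncard := by
  have hm : Monotone fun u => (S.sort (· ≤ ·)).countP (· ≤ u) := fun u u' huu' =>
    countP_mono_left fun x _ hx => by simp at hx ⊢; omega
  have hn : S.card ≤ (S.sort (· ≤ ·)).countP (· ≤ S.sup id + 1) := by
    rw [countP_eq_length.2 fun x hx => by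
      simpa using (Finset.le_sup (f := id) ((Finset.mem_sort _).1 hx)).trans (Nat.le_succ _),
      Finset.length_sort]
  rw [sInvAvoid_eq_fitAvoiders, sInvAvoid_eq_fitAvoiders]
  exact ncard_fitAvoiders_eq hm hn hij hij' hg hg₁ hg₁'

def afterFirstTrue (h : List Bool → List Bool) : List Bool → List Bool
  | [] => []
  | false :: w => false :: afterFirstTrue h w
  | true :: w => true :: h w

lemma keepsFirstTrue_afterFirstTrue (h : List Bool → List Bool) :
    KeepsFirstTrue (afterFirstTrue h) := by
  intro w k
  induction w generalizing k with
  | nil => simp [afterFirstTrue]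
  | cons b w ih =>
    cases k with
    | zero => simp
    | succ k => cases b with
      | false => simpa [afterFirstTrue] using ih k
      | true => simp

section AfterFirstTrue

variable {h h' : List Bool → List Bool} {d d' : List Bool}

lemma afterFirstTrue_perm (hh : ∀ w, h w ~ w) (w : List Bool) : afterFirstTrue h w ~ w := by
  induction w with
  | nil => rfl
  | cons b w ih => cases b with
    | false => exact ih.cons false
    | true => exact (hh w).cons true

lemma mapsTo_afterFirstTrue (hmaps : MapsTo h (Avoiding d) (Avoiding d')) :
    MapsTo (afterFirstTrue h) (Avoiding (true :: d)) (Avoiding (true :: d')) := by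
  intro w hw
  induction w with
  | nil => simp [afterFirstTrue, Avoiding]
  | cons b w ih => cases b with
    | false =>
      simpa [afterFirstTrue, Avoiding, sublist_cons_iff] using
        ih (by simpa [Avoiding, sublist_cons_iff] using hw)
    | true => simpa [afterFirstTrue, Avoiding] using hmaps (by simpa [Avoiding] using hw)

lemma leftInvOn_afterFirstTrue (hinv : LeftInvOn h' h (Avoiding d)) :
    LeftInvOn (afterFirstTrue h') (afterFirstTrue h) (Avoiding (true :: d)) := by
  intro w hw
  induction w with
  | nil => rfl
  | cons b w ih => cases b with
    | false => simpa [afterFirstTrue] using ih (by simpa [Avoiding, sublist_cons_iff] using hw)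
    | true => simpa [afterFirstTrue] using hinv (by simpa [Avoiding] using hw)

lemma IsPermBijOn.afterFirstTrue (hb : IsPermBijOn d d' h h') :
    IsPermBijOn (true :: d) (true :: d') (afterFirstTrue h) (afterFirstTrue h') :=
  ⟨afterFirstTrue_perm hb.perm, afterFirstTrue_perm hb.perm', mapsTo_afterFirstTrue hb.mapsTo,
    mapsTo_afterFirstTrue hb.mapsTo',
    ⟨leftInvOn_afterFirstTrue hb.invOn.1, leftInvOn_afterFirstTrue hb.invOn.2⟩⟩

end AfterFirstTrue

lemma isPermBijOn_reverse (i j : ℕ) :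
    IsPermBijOn (dipWord true false i j) (dipWord true false j i) reverse reverse :=
  ⟨reverse_perm, reverse_perm, fun _ hw h => hw (by simpa using h.reverse),
    fun _ hw h => hw (by simpa using h.reverse),
    ⟨fun w _ => reverse_reverse w, fun w _ => reverse_reverse w⟩⟩

def sortAsc (w : List Bool) : List Bool := w.mergeSort (· ≤ ·)

def sortDesc (w : List Bool) : List Bool := w.mergeSort (· ≥ ·)

lemma pairwise_le_iff_not_sublist {w : List Bool} :
    w.Pairwise (· ≤ ·) ↔ ¬ [true, false] <+ w := by
  rw [pairwise_iff_forall_sublist]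
  refine ⟨fun h hs => absurd (h hs) (by decide), fun h a b hab => ?_⟩
  cases a <;> cases b <;> simp_all

lemma pairwise_ge_iff_not_sublist {w : List Bool} :
    w.Pairwise (· ≥ ·) ↔ ¬ [false, true] <+ w := by
  rw [pairwise_iff_forall_sublist]
  refine ⟨fun h hs => absurd (h hs) (by decide), fun h a b hab => ?_⟩
  cases a <;> cases b <;> simp_all

lemma pairwise_sortAsc (w : List Bool) : (sortAsc w).Pairwise (· ≤ ·) := by
  simpa [sortAsc] using
    pairwise_mergeSort (le := fun a b : Bool => a ≤ b) (by decide) (by decide) w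

lemma pairwise_sortDesc (w : List Bool) : (sortDesc w).Pairwise (· ≥ ·) := by
  simpa [sortDesc] using
    pairwise_mergeSort (le := fun a b : Bool => a ≥ b) (by decide) (by decide) w

lemma isPermBijOn_sortAsc : IsPermBijOn [false, true] [true, false] sortAsc sortDesc := by
  refine ⟨(mergeSort_perm · _), (mergeSort_perm · _),
    fun w _ => pairwise_le_iff_not_sublist.1 (pairwise_sortAsc w),
    fun w _ => pairwise_ge_iff_not_sublist.1 (pairwise_sortDesc w),
    fun w hw => ?_, fun w hw => ?_⟩
  · exact ((mergeSort_perm _ _).trans (mergeSort_perm _ _)).eq_of_pairwise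
      (fun a b _ _ hab hba => le_antisymm hba hab) (pairwise_sortDesc _)
      (pairwise_ge_iff_not_sublist.2 hw)
  · exact ((mergeSort_perm _ _).trans (mergeSort_perm _ _)).eq_of_pairwise
      (fun a b _ _ hab hba => le_antisymm hab hba) (pairwise_sortAsc _)
      (pairwise_le_iff_not_sublist.2 hw)

theorem stmt_5_general (S : Finset ℕ) :
    (SInvAvoid S [1, 0, 1, 1]).ncard = (SInvAvoid S [1, 1, 0, 1]).ncard ∧
    (SInvAvoid S [1, 1, 0, 1]).ncard = (SInvAvoid S [1, 1, 1, 0]).ncard := by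
  have h₁ : (SInvAvoid S [1, 0, 1, 1]).ncard = (SInvAvoid S [1, 1, 1, 0]).ncard :=
    ncard_sInvAvoid_eq (i := 1) (j := 2) (i' := 3) (j' := 0) S (by norm_num) (by norm_num)
      (isPermBijOn_reverse 0 2).afterFirstTrue
      (keepsFirstTrue_afterFirstTrue _) (keepsFirstTrue_afterFirstTrue _)
  have h₂ : (SInvAvoid S [1, 1, 0, 1]).ncard = (SInvAvoid S [1, 1, 1, 0]).ncard :=
    ncard_sInvAvoid_eq (i := 2) (j := 1) (i' := 3) (j' := 0) S (by norm_num) (by norm_num)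
      isPermBijOn_sortAsc.afterFirstTrue.afterFirstTrue
      (keepsFirstTrue_afterFirstTrue _) (keepsFirstTrue_afterFirstTrue _)
  exact ⟨h₁.trans h₂.symm, h₂⟩

/-- Theorem: `|I_S(1011)| = |I_S(1101)| = |I_S(1110)|` for any finite set `S`
of positive integers. -/
theorem stmt_5 (S : Finset ℕ) (hS : ∀ x ∈ S, 0 < x) :
    (SInvAvoid S [1, 0, 1, 1]).ncard = (SInvAvoid S [1, 1, 0, 1]).ncard ∧
    (SInvAvoid S [1, 1, 0, 1]).ncard = (SInvAvoid S [1, 1, 1, 0]).ncard :=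
  stmt_5_general S
end

section
/- For any finite set S of positive integers, the number of S-inversion sequences avoiding the pattern 2301 equals the number of S-inversion sequences avoiding the pattern 2310; i.e. |I_S(2301)| = |I_S(2310)|. -/
/-!
Write `M e k` (`ascentMax`) for the largest `e i` such that `e i < e j` for some `i < j < k`, and
call `k` active when `e k < M e k`. In an occurrence of `2301` or `2310` the first two entries only
raise `M` above the third one, so the last two entries sit at active positions. Along the active
positions `k₁ < k₂ < ⋯`, with nondecreasing bounds `m_r = M e k_r` and values `v_r < m_r`, avoiding
`2310` says that the `v_r` weakly increase, and avoiding `2301` says that no later `v_s` falls into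
the gap `(v_r, m_r)`. For a fixed bound sequence the two kinds of value sequences are in bijection:
reflect `v₁ ↦ m₁ - 1 - v₁`, collapse the gap and recurse. Replacing the active values by others
below their bounds changes neither `M` nor the active positions, and keeps `e k < s_k` because
`M e k ≤ s_k`; so the bijection on active values lifts to one between `I_S(2301)` and `I_S(2310)`.
-/

namespace InversionSequence

open Classical in
noncomputable def ascentMax (e : List ℕ) (k : ℕ) : ℕ :=
  ((Finset.range k).filter fun i => ∃ j, i < j ∧ j < k ∧ e[i]! < e[j]!).sup fun i => e[i]!

theorem lt_ascentMax_iff {e : List ℕ} {a k : ℕ} :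
    a < ascentMax e k ↔ ∃ i j, i < j ∧ j < k ∧ e[i]! < e[j]! ∧ a < e[i]! := by
  simp only [ascentMax, Finset.lt_sup_iff, Finset.mem_filter, Finset.mem_range]
  constructor
  · rintro ⟨i, ⟨-, j, hij, hjk, hlt⟩, h⟩
    exact ⟨i, j, hij, hjk, hlt, h⟩
  · rintro ⟨i, j, hij, hjk, hlt, h⟩
    exact ⟨i, ⟨hij.trans hjk, j, hij, hjk, hlt⟩, h⟩

theorem ascentMax_le_iff {e : List ℕ} {k c : ℕ} :
    ascentMax e k ≤ c ↔ ∀ i j, i < j → j < k → e[i]! < e[j]! → e[i]! ≤ c := by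
  simp only [← not_lt, lt_ascentMax_iff, not_exists, not_and]

theorem le_ascentMax {e : List ℕ} {i j k : ℕ} (hij : i < j) (hjk : j < k)
    (hlt : e[i]! < e[j]!) : e[i]! ≤ ascentMax e k :=
  ascentMax_le_iff.mp le_rfl i j hij hjk hlt

theorem ascentMax_mono (e : List ℕ) : Monotone (ascentMax e) := fun _ _ h =>
  ascentMax_le_iff.mpr fun _ _ hij hjk hlt => le_ascentMax hij (hjk.trans_le h) hlt

/-- A changed entry is too small to be the bottom of a larger ascent, and any ascent it tops has an
even smaller bottom. -/
theorem ascentMax_eq_of_forall {e e' : List ℕ} {n : ℕ}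
    (H : ∀ i < n, e'[i]! = e[i]! ∨ (e[i]! < ascentMax e i ∧ e'[i]! < ascentMax e i)) :
    ∀ k ≤ n, ascentMax e' k = ascentMax e k := by
  intro k
  induction k using Nat.strong_induction_on with
  | _ k IH =>
    intro hk
    apply le_antisymm <;> rw [ascentMax_le_iff] <;> intro i j hij hjk hlt
    · rcases H i (by omega) with hi | ⟨-, hi⟩
      · rcases H j (by omega) with hj | ⟨-, hj⟩
        · rw [hi]
          exact le_ascentMax hij hjk (by rwa [← hi, ← hj])
        · have := ascentMax_mono e hjk.le
          omega
      · have := ascentMax_mono e (hij.trans hjk).le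
        omega
    · rcases H i (by omega) with hi | ⟨hi, -⟩
      · rcases H j (by omega) with hj | ⟨hj, -⟩
        · rw [← hi]
          exact le_ascentMax hij hjk (by rwa [hi, hj])
        · have := ascentMax_mono e' hjk.le
          rw [IH j (by omega) (by omega)] at this
          omega
      · have := ascentMax_mono e' (hij.trans hjk).le
        rw [IH i (by omega) (by omega)] at this
        omega

theorem containsPat_iff_of_length_eq_four {e p : List ℕ} (hp : p.length = 4) :
    ContainsPat e p ↔ ∃ i j k l, i < j ∧ j < k ∧ k < l ∧ l < e.length ∧
      OrderIsoSeq [e[i]!, e[j]!, e[k]!, e[l]!] p := by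
  constructor
  · rintro ⟨s, hs, hiso⟩
    obtain ⟨is, rfl, hpw⟩ := List.sublist_eq_map_getElem hs
    obtain ⟨i, j, k, l, rfl⟩ : ∃ i j k l : Fin e.length, is = [i, j, k, l] := by
      match is, (by simpa [hp] using hiso.1 : is.length = 4) with
      | [i, j, k, l], _ => exact ⟨i, j, k, l, rfl⟩
    simp only [List.pairwise_cons, List.mem_cons, List.not_mem_nil] at hpw
    refine ⟨i, j, k, l, hpw.1 j (by simp), hpw.2.1 k (by simp), hpw.2.2.1 l (by simp), l.2, ?_⟩
    simpa [getElem!_pos e (i : ℕ) i.2, getElem!_pos e (j : ℕ) j.2, getElem!_pos e (k : ℕ) k.2,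
      getElem!_pos e (l : ℕ) l.2] using hiso
  · rintro ⟨i, j, k, l, hij, hjk, hkl, hl, hiso⟩
    refine ⟨_, ?_, hiso⟩
    have hs := List.map_getElem_sublist (l := e)
      (is := [⟨i, by omega⟩, ⟨j, by omega⟩, ⟨k, by omega⟩, ⟨l, hl⟩])
      (by simp [List.pairwise_cons]; omega)
    simpa [getElem!_pos e i (by omega), getElem!_pos e j (by omega), getElem!_pos e k (by omega),
      getElem!_pos e l hl] using hs

theorem orderIsoSeq_2301_iff {a b c d : ℕ} :
    OrderIsoSeq [a, b, c, d] [2, 3, 0, 1] ↔ a < b ∧ c < d ∧ d < a := by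
  constructor
  · rintro ⟨-, h⟩
    have h01 := (h 0 1 (by simp) (by simp)).1
    have h23 := (h 2 3 (by simp) (by simp)).1
    have h30 := (h 3 0 (by simp) (by simp)).1
    simp_all
  · rintro ⟨hab, hcd, hda⟩
    refine ⟨rfl, fun i j hi hj => ?_⟩
    simp only [List.length_cons, List.length_nil] at hi hj
    interval_cases i <;> interval_cases j <;> simp <;> omega

theorem orderIsoSeq_2310_iff {a b c d : ℕ} :
    OrderIsoSeq [a, b, c, d] [2, 3, 1, 0] ↔ a < b ∧ d < c ∧ c < a := by
  constructor
  · rintro ⟨-, h⟩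
    have h01 := (h 0 1 (by simp) (by simp)).1
    have h32 := (h 3 2 (by simp) (by simp)).1
    have h20 := (h 2 0 (by simp) (by simp)).1
    simp_all
  · rintro ⟨hab, hdc, hca⟩
    refine ⟨rfl, fun i j hi hj => ?_⟩
    simp only [List.length_cons, List.length_nil] at hi hj
    interval_cases i <;> interval_cases j <;> simp <;> omega

theorem containsPat_2301_iff {e : List ℕ} :
    ContainsPat e [2, 3, 0, 1] ↔
      ∃ k l, k < l ∧ l < e.length ∧ e[k]! < e[l]! ∧ e[l]! < ascentMax e k := by
  simp only [containsPat_iff_of_length_eq_four (p := [2, 3, 0, 1]) rfl, orderIsoSeq_2301_iff]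
  constructor
  · rintro ⟨i, j, k, l, hij, hjk, hkl, hl, h1, h2, h3⟩
    exact ⟨k, l, hkl, hl, h2, h3.trans_le (le_ascentMax hij hjk h1)⟩
  · rintro ⟨k, l, hkl, hl, h2, h3⟩
    obtain ⟨i, j, hij, hjk, h1, h4⟩ := lt_ascentMax_iff.mp h3
    exact ⟨i, j, k, l, hij, hjk, hkl, hl, h1, h2, h4⟩

theorem containsPat_2310_iff {e : List ℕ} :
    ContainsPat e [2, 3, 1, 0] ↔
      ∃ k l, k < l ∧ l < e.length ∧ e[l]! < e[k]! ∧ e[k]! < ascentMax e k := by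
  simp only [containsPat_iff_of_length_eq_four (p := [2, 3, 1, 0]) rfl, orderIsoSeq_2310_iff]
  constructor
  · rintro ⟨i, j, k, l, hij, hjk, hkl, hl, h1, h2, h3⟩
    exact ⟨k, l, hkl, hl, h2, h3.trans_le (le_ascentMax hij hjk h1)⟩
  · rintro ⟨k, l, hkl, hl, h2, h3⟩
    obtain ⟨i, j, hij, hjk, h1, h4⟩ := lt_ascentMax_iff.mp h3
    exact ⟨i, j, k, l, hij, hjk, hkl, hl, h1, h2, h4⟩

def PairwiseBelow (R : ℕ → ℕ → ℕ → Prop) : List ℕ → List ℕ → Prop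
  | m :: ms, v :: vs => v < m ∧ (∀ x ∈ vs, R m v x) ∧ PairwiseBelow R ms vs
  | [], [] => True
  | _, _ => False

abbrev IncBelow : List ℕ → List ℕ → Prop := PairwiseBelow fun _ v x => v ≤ x

abbrev GapBelow : List ℕ → List ℕ → Prop := PairwiseBelow fun m v x => x ≤ v ∨ m ≤ x

section PairwiseBelow

variable {R R' : ℕ → ℕ → ℕ → Prop}

@[simp]
theorem pairwiseBelow_nil_nil : PairwiseBelow R [] [] := trivial

theorem PairwiseBelow.length_eq : ∀ {m v : List ℕ}, PairwiseBelow R m v → v.length = m.length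
  | [], [], _ => rfl
  | _ :: _, _ :: _, h => congrArg (· + 1) h.2.2.length_eq

theorem PairwiseBelow.getElem!_lt : ∀ {m v : List ℕ}, PairwiseBelow R m v →
    ∀ r < m.length, v[r]! < m[r]!
  | [], _, _, _, hr => absurd hr (Nat.not_lt_zero _)
  | _ :: _, [], h, _, _ => h.elim
  | _ :: _, _ :: _, h, 0, _ => h.1
  | _ :: _, _ :: _, h, r + 1, hr => h.2.2.getElem!_lt r (by simpa using hr)

theorem PairwiseBelow.map {P Q : ℕ → Prop} {f g : ℕ → ℕ}
    (hlt : ∀ a x, P a → Q x → x < a → g x < f a)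
    (hR : ∀ a x y, P a → Q x → Q y → R a x y → R' (f a) (g x) (g y)) :
    ∀ {m v : List ℕ}, (∀ a ∈ m, P a) → (∀ x ∈ v, Q x) → PairwiseBelow R m v →
      PairwiseBelow R' (m.map f) (v.map g)
  | [], [], _, _, _ => trivial
  | [], _ :: _, _, _, h => h.elim
  | _ :: _, [], _, _, h => h.elim
  | a :: m, x :: v, hm, hv, ⟨hxa, hxv, h⟩ => by
    refine ⟨hlt a x (hm a (by simp)) (hv x (by simp)) hxa, ?_, ?_⟩
    · simp only [List.mem_map]
      rintro _ ⟨y, hy, rfl⟩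
      exact hR a x y (hm a (by simp)) (hv x (by simp)) (hv y (by simp [hy])) (hxv y hy)
    · exact PairwiseBelow.map hlt hR (fun b hb => hm b (by simp [hb]))
        (fun y hy => hv y (by simp [hy])) h

theorem pairwiseBelow_map_map {f g : ℕ → ℕ} : ∀ {L : List ℕ},
    PairwiseBelow R (L.map f) (L.map g) ↔
      (∀ k ∈ L, g k < f k) ∧ L.Pairwise fun k l => R (f k) (g k) (g l)
  | [] => by simp
  | k :: L => by
    simp only [List.map_cons, PairwiseBelow, pairwiseBelow_map_map, List.mem_cons,
      forall_eq_or_imp, List.pairwise_cons, List.mem_map, forall_exists_index, and_imp,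
      forall_apply_eq_imp_iff₂]
    tauto

end PairwiseBelow

def collapse (a d x : ℕ) : ℕ := if x ≤ a then x else x - d

def expand (a d x : ℕ) : ℕ := if x ≤ a then x else x + d

/-- Collapsing the gap `(v, m)`, which the later entries avoid, lowers their bounds by
`m - 1 - v`; shifting the recursive result back up makes it dominate the new first entry. -/
def toIncBelow : List ℕ → List ℕ → List ℕ
  | m :: ms, v :: vs =>
      (m - 1 - v) ::
        (toIncBelow (ms.map (· - (m - 1 - v))) (vs.map (collapse v (m - 1 - v)))).map
          (· + (m - 1 - v))
  | _, _ => []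
termination_by _ v => v.length

def ofIncBelow : List ℕ → List ℕ → List ℕ
  | m :: ms, w :: ws =>
      (m - 1 - w) :: (ofIncBelow (ms.map (· - w)) (ws.map (· - w))).map (expand (m - 1 - w) w)
  | _, _ => []
termination_by _ w => w.length

theorem map_sub_map_add (d : ℕ) (l : List ℕ) : (l.map (· + d)).map (· - d) = l := by
  simp [Function.comp_def]

theorem map_add_map_sub {d : ℕ} {l : List ℕ} (h : ∀ x ∈ l, d ≤ x) :
    (l.map (· - d)).map (· + d) = l := by
  rw [List.map_map]
  exact (List.map_congr_left fun x hx => Nat.sub_add_cancel (h x hx)).trans (List.map_id l)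

theorem collapse_expand {a d x : ℕ} : collapse a d (expand a d x) = x := by
  unfold collapse expand
  split_ifs <;> omega

theorem expand_collapse {a d x : ℕ} (h : x ≤ a ∨ a + d < x) :
    expand a d (collapse a d x) = x := by
  unfold collapse expand
  split_ifs <;> omega

theorem GapBelow.map_collapse {m v : ℕ} {ms vs : List ℕ} (hms : ∀ b ∈ ms, m ≤ b)
    (hvs : ∀ x ∈ vs, x ≤ v ∨ m ≤ x) (h : GapBelow ms vs) :
    GapBelow (ms.map (· - (m - 1 - v))) (vs.map (collapse v (m - 1 - v))) :=
  h.map (P := (m ≤ ·)) (Q := fun x => x ≤ v ∨ m ≤ x)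
    (fun _ _ _ _ _ => by unfold collapse; split_ifs <;> omega)
    (fun _ _ _ _ _ _ hxy => by unfold collapse; split_ifs <;> omega) hms hvs

theorem GapBelow.map_expand {m w : ℕ} {ms u : List ℕ} (hwm : w < m) (hms : ∀ b ∈ ms, m ≤ b)
    (h : GapBelow (ms.map (· - w)) u) : GapBelow ms (u.map (expand (m - 1 - w) w)) := by
  have h' : GapBelow _ _ := h.map (P := (m - w ≤ ·)) (Q := fun _ => True) (f := (· + w))
    (g := expand (m - 1 - w) w) (fun _ _ _ _ _ => by unfold expand; split_ifs <;> omega)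
    (fun _ _ _ _ _ _ hxy => by unfold expand; split_ifs <;> omega)
    (by simpa using fun b hb => Nat.sub_le_sub_right (hms b hb) w) (by simp)
  rwa [map_add_map_sub fun b hb => by have := hms b hb; omega] at h'

theorem toIncBelow_spec : ∀ {m v : List ℕ}, m.Pairwise (· ≤ ·) → GapBelow m v →
    IncBelow m (toIncBelow m v) ∧ ofIncBelow m (toIncBelow m v) = v
  | [], [], _, _ => by simp [toIncBelow, ofIncBelow]
  | m :: ms, v :: vs, hm, ⟨hvm, hvs, hgap⟩ => by
    replace hvs : ∀ x ∈ vs, x ≤ v ∨ m ≤ x := hvs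
    obtain ⟨hmms, hms⟩ := List.pairwise_cons.mp hm
    set d := m - 1 - v
    obtain ⟨hinc, hround⟩ :=
      toIncBelow_spec (hms.map (· - d) fun _ _ h => Nat.sub_le_sub_right h d)
        (GapBelow.map_collapse hmms hvs hgap)
    rw [toIncBelow]
    refine ⟨⟨by omega, ?_, ?_⟩, ?_⟩
    · simp only [List.mem_map]
      rintro _ ⟨y, -, rfl⟩
      omega
    · have h : IncBelow _ _ := hinc.map (P := fun _ => True) (Q := fun _ => True)
        (f := (· + d)) (g := (· + d)) (fun _ _ _ _ h => Nat.add_lt_add_right h d)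
        (fun _ _ _ _ _ _ h => Nat.add_le_add_right h d) (by simp) (by simp)
      rwa [map_add_map_sub fun b hb => by have := hmms b hb; omega] at h
    · rw [ofIncBelow, show m - 1 - d = v by omega, map_sub_map_add, hround, List.map_map]
      refine congrArg _ ((List.map_congr_left fun x hx => ?_).trans (List.map_id vs))
      exact expand_collapse (by have := hvs x hx; omega)
  termination_by _ v => v.length

theorem ofIncBelow_spec : ∀ {m w : List ℕ}, m.Pairwise (· ≤ ·) → IncBelow m w →
    GapBelow m (ofIncBelow m w) ∧ toIncBelow m (ofIncBelow m w) = w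
  | [], [], _, _ => by simp [toIncBelow, ofIncBelow]
  | m :: ms, w :: ws, hm, ⟨hwm, hws, hinc⟩ => by
    replace hws : ∀ x ∈ ws, w ≤ x := hws
    obtain ⟨hmms, hms⟩ := List.pairwise_cons.mp hm
    have hinc' : IncBelow (ms.map (· - w)) (ws.map (· - w)) :=
      hinc.map (P := (m ≤ ·)) (Q := (w ≤ ·)) (fun _ _ _ _ _ => by omega)
        (fun _ _ _ _ _ _ hxy => by omega) hmms hws
    obtain ⟨hgap, hround⟩ :=
      ofIncBelow_spec (hms.map (· - w) fun _ _ h => Nat.sub_le_sub_right h w) hinc'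
    set v := m - 1 - w
    rw [ofIncBelow]
    refine ⟨⟨by omega, ?_, GapBelow.map_expand hwm hmms hgap⟩, ?_⟩
    · simp only [List.mem_map]
      rintro _ ⟨y, -, rfl⟩
      unfold expand
      split_ifs <;> omega
    · rw [toIncBelow, show m - 1 - v = w by omega, List.map_map]
      simp only [Function.comp_def, collapse_expand]
      rw [List.map_id', hround, map_add_map_sub hws]
  termination_by _ w => w.length

theorem pairwise_sort_iff {α : Type*} [LinearOrder α] {s : Finset α} {P : α → α → Prop} :
    (s.sort (· ≤ ·)).Pairwise P ↔ ∀ a ∈ s, ∀ b ∈ s, a < b → P a b := by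
  have hlt := (Finset.sortedLT_sort s).pairwise
  constructor
  · intro h a ha b hb hab
    refine List.Pairwise.forall_of_forall_of_flip (R := fun a b => a < b → P a b)
      (fun x _ hx => absurd hx (lt_irrefl x))
      (h.imp (S := fun a b => a < b → P a b) fun hab _ => hab)
      (hlt.imp fun h h' => absurd h (not_lt.mpr h'.le)) ?_ ?_ hab <;>
      simpa
  · intro h
    exact hlt.imp_of_mem fun ha hb hab => h _ (by simpa using ha) _ (by simpa using hb) hab

noncomputable def active (e : List ℕ) : Finset ℕ :=
  (Finset.range e.length).filter fun k => e[k]! < ascentMax e k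

noncomputable def activeList (e : List ℕ) : List ℕ := (active e).sort (· ≤ ·)

noncomputable def activeBounds (e : List ℕ) : List ℕ := (activeList e).map (ascentMax e)

noncomputable def activeValues (e : List ℕ) : List ℕ := (activeList e).map (e[·]!)

section Active

variable {e : List ℕ}

theorem mem_active {k : ℕ} : k ∈ active e ↔ k < e.length ∧ e[k]! < ascentMax e k := by
  simp [active]

theorem mem_activeList {k : ℕ} : k ∈ activeList e ↔ k ∈ active e := Finset.mem_sort _

theorem getElem!_activeList_idxOf {k : ℕ} (hk : k ∈ active e) :
    (activeList e).idxOf k < (activeList e).length ∧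
      (activeList e)[(activeList e).idxOf k]! = k := by
  have h := List.idxOf_lt_length_iff.mpr (mem_activeList.mpr hk)
  exact ⟨h, by rw [getElem!_pos (activeList e) _ h, List.getElem_idxOf]⟩

theorem activeList_idxOf_getElem! {r : ℕ} (hr : r < (activeList e).length) :
    (activeList e).idxOf (activeList e)[r]! = r := by
  rw [getElem!_pos _ r hr]
  exact (Finset.sort_nodup _ _).idxOf_getElem r hr

theorem getElem!_activeList_mem {r : ℕ} (hr : r < (activeList e).length) :
    (activeList e)[r]! ∈ active e := by
  rw [← mem_activeList, getElem!_pos _ r hr]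
  exact List.getElem_mem hr

@[simp]
theorem length_activeBounds : (activeBounds e).length = (activeList e).length := by
  simp [activeBounds]

@[simp]
theorem length_activeValues : (activeValues e).length = (activeList e).length := by
  simp [activeValues]

theorem getElem!_activeBounds {r : ℕ} (hr : r < (activeList e).length) :
    (activeBounds e)[r]! = ascentMax e (activeList e)[r]! := by
  rw [getElem!_pos _ r (by simpa using hr), getElem!_pos _ r hr]
  simp [activeBounds]

theorem getElem!_activeValues {r : ℕ} (hr : r < (activeList e).length) :
    (activeValues e)[r]! = e[(activeList e)[r]!]! := by
  rw [getElem!_pos _ r (by simpa using hr), getElem!_pos _ r hr]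
  simp [activeValues]

theorem pairwiseBelow_active_iff {R : ℕ → ℕ → ℕ → Prop} :
    PairwiseBelow R (activeBounds e) (activeValues e) ↔
      ∀ k ∈ active e, ∀ l ∈ active e, k < l → R (ascentMax e k) e[k]! e[l]! := by
  rw [activeBounds, activeValues, pairwiseBelow_map_map, activeList, pairwise_sort_iff,
    and_iff_right_iff_imp]
  intro _ k hk
  exact (mem_active.mp (by simpa using hk)).2

theorem gapBelow_active_iff :
    GapBelow (activeBounds e) (activeValues e) ↔ AvoidsPat e [2, 3, 0, 1] := by
  simp only [GapBelow, pairwiseBelow_active_iff, AvoidsPat, containsPat_2301_iff]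
  constructor
  · rintro h ⟨k, l, hkl, hl, hkl', hlM⟩
    have hk : k ∈ active e := mem_active.mpr ⟨by omega, hkl'.trans hlM⟩
    have hl' : l ∈ active e := mem_active.mpr ⟨hl, hlM.trans_le (ascentMax_mono e hkl.le)⟩
    have := h k hk l hl' hkl
    omega
  · intro h k hk l hl hkl
    by_contra! hc
    exact h ⟨k, l, hkl, (mem_active.mp hl).1, hc.1, hc.2⟩

theorem incBelow_active_iff :
    IncBelow (activeBounds e) (activeValues e) ↔ AvoidsPat e [2, 3, 1, 0] := by
  simp only [IncBelow, pairwiseBelow_active_iff, AvoidsPat, containsPat_2310_iff]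
  constructor
  · rintro h ⟨k, l, hkl, hl, hlk, hkM⟩
    have hk : k ∈ active e := mem_active.mpr ⟨by omega, hkM⟩
    have hl' : l ∈ active e :=
      mem_active.mpr ⟨hl, (hlk.trans hkM).trans_le (ascentMax_mono e hkl.le)⟩
    have := h k hk l hl' hkl
    omega
  · intro h k hk l hl hkl
    by_contra! hc
    exact h ⟨k, l, hkl, (mem_active.mp hl).1, hc, (mem_active.mp hk).2⟩

end Active

def BoundedBy (b e : List ℕ) : Prop := e.length = b.length ∧ ∀ i < b.length, e[i]! < b[i]!

theorem BoundedBy.ascentMax_le {b e : List ℕ} (hb : b.Pairwise (· ≤ ·)) (he : BoundedBy b e)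
    {k : ℕ} (hk : k < b.length) : ascentMax e k ≤ b[k]! := by
  refine ascentMax_le_iff.mpr fun i j hij hjk _ => (he.2 i (by omega)).le.trans ?_
  rw [getElem!_pos b i (by omega), getElem!_pos b k hk]
  exact List.pairwise_iff_getElem.mp hb i k _ _ (by omega)

noncomputable def replaceActive (e w : List ℕ) : List ℕ :=
  List.ofFn fun k : Fin e.length =>
    if (k : ℕ) ∈ active e then w[(activeList e).idxOf (k : ℕ)]! else e[(k : ℕ)]!

section ReplaceActive

variable {e w : List ℕ}

@[simp]
theorem length_replaceActive : (replaceActive e w).length = e.length := by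
  simp [replaceActive]

theorem getElem!_replaceActive {k : ℕ} (hk : k < e.length) :
    (replaceActive e w)[k]! = if k ∈ active e then w[(activeList e).idxOf k]! else e[k]! := by
  rw [getElem!_pos _ k (by simpa using hk)]
  simp only [replaceActive, List.getElem_ofFn]

theorem getElem!_replaceActive_of_mem {k : ℕ} (hk : k ∈ active e) :
    (replaceActive e w)[k]! = w[(activeList e).idxOf k]! := by
  rw [getElem!_replaceActive (mem_active.mp hk).1, if_pos hk]

theorem getElem!_replaceActive_of_notMem {k : ℕ} (hk : k < e.length) (hk' : k ∉ active e) :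
    (replaceActive e w)[k]! = e[k]! := by
  rw [getElem!_replaceActive hk, if_neg hk']

variable (hwl : w.length = (activeBounds e).length)
  (hwb : ∀ r < (activeBounds e).length, w[r]! < (activeBounds e)[r]!)

include hwb

theorem getElem!_replaceActive_lt {k : ℕ} (hk : k ∈ active e) :
    (replaceActive e w)[k]! < ascentMax e k := by
  obtain ⟨hr, hrk⟩ := getElem!_activeList_idxOf hk
  rw [getElem!_replaceActive_of_mem hk]
  have h := hwb _ (by simpa using hr)
  rwa [getElem!_activeBounds hr, hrk] at h

theorem ascentMax_replaceActive :
    ∀ k ≤ e.length, ascentMax (replaceActive e w) k = ascentMax e k :=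
  ascentMax_eq_of_forall fun i hi => by
    by_cases h : i ∈ active e
    · exact Or.inr ⟨(mem_active.mp h).2, getElem!_replaceActive_lt hwb h⟩
    · exact Or.inl (getElem!_replaceActive_of_notMem hi h)

theorem active_replaceActive : active (replaceActive e w) = active e := by
  ext k
  rw [mem_active, mem_active, length_replaceActive, and_congr_right_iff]
  intro hk
  rw [ascentMax_replaceActive hwb k hk.le]
  by_cases h : k ∈ active e
  · exact iff_of_true (getElem!_replaceActive_lt hwb h) (mem_active.mp h).2
  · rw [getElem!_replaceActive_of_notMem hk h]

theorem BoundedBy.replaceActive {b : List ℕ} (hb : b.Pairwise (· ≤ ·)) (he : BoundedBy b e) :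
    BoundedBy b (replaceActive e w) := by
  refine ⟨by simp [he.1], fun k hk => ?_⟩
  by_cases h : k ∈ active e
  · exact (getElem!_replaceActive_lt hwb h).trans_le (he.ascentMax_le hb hk)
  · rw [getElem!_replaceActive_of_notMem (he.1 ▸ hk) h]
    exact he.2 k hk

theorem activeList_replaceActive : activeList (replaceActive e w) = activeList e := by
  rw [activeList, activeList, active_replaceActive hwb]

theorem activeBounds_replaceActive : activeBounds (replaceActive e w) = activeBounds e := by
  rw [activeBounds, activeBounds, activeList_replaceActive hwb]
  exact List.map_congr_left fun k hk =>
    ascentMax_replaceActive hwb k (mem_active.mp (mem_activeList.mp hk)).1.le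

theorem replaceActive_replaceActive : replaceActive (replaceActive e w) (activeValues e) = e := by
  refine List.ext_getElem (by simp) fun k h1 h2 => ?_
  rw [← getElem!_pos _ k h1, ← getElem!_pos e k h2]
  by_cases h : k ∈ active e
  · obtain ⟨hr, hrk⟩ := getElem!_activeList_idxOf h
    rw [getElem!_replaceActive_of_mem ((active_replaceActive hwb).symm ▸ h),
      activeList_replaceActive hwb, getElem!_activeValues hr, hrk]
  · rw [getElem!_replaceActive_of_notMem (by simpa using h2)
      ((active_replaceActive hwb).symm ▸ h), getElem!_replaceActive_of_notMem h2 h]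

include hwl

theorem activeValues_replaceActive : activeValues (replaceActive e w) = w := by
  rw [activeValues, activeList_replaceActive hwb]
  refine List.ext_getElem (by simp [hwl]) fun r h1 h2 => ?_
  have hr : r < (activeList e).length := by simpa using h1
  rw [List.getElem_map, ← getElem!_pos w r h2, ← getElem!_pos (activeList e) r hr,
    getElem!_replaceActive_of_mem (getElem!_activeList_mem hr), activeList_idxOf_getElem! hr]

end ReplaceActive

theorem pairwise_activeBounds (e : List ℕ) : (activeBounds e).Pairwise (· ≤ ·) :=
  List.pairwise_map.mpr ((Finset.pairwise_sort _ _).imp fun h => ascentMax_mono e h)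

noncomputable def activeTransform (f : List ℕ → List ℕ → List ℕ) (e : List ℕ) : List ℕ :=
  replaceActive e (f (activeBounds e) (activeValues e))

section ActiveTransform

variable {R R' : ℕ → ℕ → ℕ → Prop} {b : List ℕ} {f g : List ℕ → List ℕ → List ℕ}

theorem mapsTo_activeTransform (hb : b.Pairwise (· ≤ ·))
    (hf : ∀ m v, m.Pairwise (· ≤ ·) → PairwiseBelow R m v → PairwiseBelow R' m (f m v)) :
    Set.MapsTo (activeTransform f)
      {e | BoundedBy b e ∧ PairwiseBelow R (activeBounds e) (activeValues e)}
      {e | BoundedBy b e ∧ PairwiseBelow R' (activeBounds e) (activeValues e)} := by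
  rintro e ⟨he, hR⟩
  have hw := hf _ _ (pairwise_activeBounds e) hR
  refine ⟨he.replaceActive hw.getElem!_lt hb, ?_⟩
  rwa [activeTransform, activeBounds_replaceActive hw.getElem!_lt,
    activeValues_replaceActive hw.length_eq hw.getElem!_lt]

theorem leftInvOn_activeTransform
    (hf : ∀ m v, m.Pairwise (· ≤ ·) → PairwiseBelow R m v →
      PairwiseBelow R' m (f m v) ∧ g m (f m v) = v) :
    Set.LeftInvOn (activeTransform g) (activeTransform f)
      {e | BoundedBy b e ∧ PairwiseBelow R (activeBounds e) (activeValues e)} := by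
  rintro e ⟨-, hR⟩
  obtain ⟨hw, hgf⟩ := hf _ _ (pairwise_activeBounds e) hR
  rw [activeTransform, activeTransform, activeBounds_replaceActive hw.getElem!_lt,
    activeValues_replaceActive hw.length_eq hw.getElem!_lt, hgf,
    replaceActive_replaceActive hw.getElem!_lt]

theorem ncard_eq_of_pairwiseBelow_bijection (hb : b.Pairwise (· ≤ ·))
    (hf : ∀ m v, m.Pairwise (· ≤ ·) → PairwiseBelow R m v →
      PairwiseBelow R' m (f m v) ∧ g m (f m v) = v)
    (hg : ∀ m w, m.Pairwise (· ≤ ·) → PairwiseBelow R' m w →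
      PairwiseBelow R m (g m w) ∧ f m (g m w) = w) :
    {e | BoundedBy b e ∧ PairwiseBelow R (activeBounds e) (activeValues e)}.ncard =
      {e | BoundedBy b e ∧ PairwiseBelow R' (activeBounds e) (activeValues e)}.ncard :=
  (Set.InvOn.bijOn ⟨leftInvOn_activeTransform hf, leftInvOn_activeTransform hg⟩
    (mapsTo_activeTransform hb fun m v hm h => (hf m v hm h).1)
    (mapsTo_activeTransform hb fun m w hm h => (hg m w hm h).1)).ncard_eq

end ActiveTransform

theorem ncard_boundedBy_avoidsPat_2301_eq (b : List ℕ) (hb : b.Pairwise (· ≤ ·)) :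
    {e | BoundedBy b e ∧ AvoidsPat e [2, 3, 0, 1]}.ncard =
      {e | BoundedBy b e ∧ AvoidsPat e [2, 3, 1, 0]}.ncard := by
  simp only [← gapBelow_active_iff, ← incBelow_active_iff]
  exact ncard_eq_of_pairwiseBelow_bijection hb (fun _ _ => toIncBelow_spec)
    (fun _ _ => ofIncBelow_spec)

theorem sInvAvoid_eq (S : Finset ℕ) (p : List ℕ) :
    SInvAvoid S p = {e | BoundedBy (S.sort (· ≤ ·)) e ∧ AvoidsPat e p} := by
  ext e
  simp [SInvAvoid, SInvSeq, BoundedBy]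

end InversionSequence

theorem stmt_13_general (S : Finset ℕ) :
    (SInvAvoid S [2, 3, 0, 1]).ncard = (SInvAvoid S [2, 3, 1, 0]).ncard := by
  rw [InversionSequence.sInvAvoid_eq, InversionSequence.sInvAvoid_eq]
  exact InversionSequence.ncard_boundedBy_avoidsPat_2301_eq _ (Finset.pairwise_sort S _)

/-- Theorem: `|I_S(2301)| = |I_S(2310)|` for any finite set `S` of positive integers. -/
theorem stmt_13 (S : Finset ℕ) (hS : ∀ x ∈ S, 0 < x) :
    (SInvAvoid S [2, 3, 0, 1]).ncard = (SInvAvoid S [2, 3, 1, 0]).ncard :=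
  stmt_13_general S
end
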